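/- arXiv:1407.2485 — 9 statements merged into one kernel-verified Lean document; each statement's English description precedes it below -/
import Mathlib

section
/- Let P be an n×n positive stochastic real matrix and let v ∈ Δ^{n-1}_+. Then the matrix P + J_v(I_n − P) is similar (over ℝ) to P. -/
/-!
Let `w` be the stationary distribution of `P` (`w P = w`, `∑ w = 1`) and `N = J_{w - v}`.
Since `∑ (w - v) = 0` we have `N² = 0`, so `1 + N` is invertible with inverse `1 - N`; since `P`
is stochastic `P N = N`, and `w P = w` gives `N P - N = J_v (1 - P)`. Hence
`(1 + N) P (1 - N) = P + N P - N = P + J_v (1 - P)`.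

The stationary distribution exists because a positive `P` fixes no nonzero vector `w` with
`∑ w = 0`: such a `w` has entries of both signs, so `|w P| ≤ |w| P` is strict in every
coordinate, and summing contradicts `∑ (|w| P) = ∑ |w|`.
-/

open Matrix BigOperators

/-- `Jmat v` is the matrix whose `(i,j)` entry is `v j`. -/
def Jmat {n : ℕ} (v : Fin n → ℝ) : Matrix (Fin n) (Fin n) ℝ :=
  Matrix.of fun _ j => v j

open Finset

theorem Finset.abs_sum_lt_sum_abs {ι G : Type*} [AddCommGroup G] [LinearOrder G]
    [IsOrderedAddMonoid G] {s : Finset ι} {f : ι → G} (hpos : ∃ i ∈ s, 0 < f i)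
    (hneg : ∃ i ∈ s, f i < 0) : |∑ i ∈ s, f i| < ∑ i ∈ s, |f i| := by
  obtain ⟨p, hps, hp⟩ := hpos
  obtain ⟨q, hqs, hq⟩ := hneg
  rw [abs_lt, ← sum_neg_distrib]
  constructor
  · exact sum_lt_sum (fun i _ => neg_abs_le (f i))
      ⟨p, hps, (neg_neg_of_pos (abs_pos.2 hp.ne')).trans hp⟩
  · exact sum_lt_sum (fun i _ => le_abs_self (f i)) ⟨q, hqs, hq.trans_le (abs_nonneg _)⟩

namespace Matrix

section CommRing

variable {ι R : Type*} [CommRing R]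

lemma replicateRow_sub (u w : ι → R) :
    replicateRow ι (u - w) = replicateRow ι u - replicateRow ι w := rfl

variable [Fintype ι] {P : Matrix ι ι R}

lemma replicateRow_mul_replicateRow (u w : ι → R) :
    replicateRow ι u * replicateRow ι w = (∑ i, u i) • replicateRow ι w := by
  ext i j
  simp [mul_apply, sum_mul]

lemma mul_replicateRow_of_mulVec_one (hP : P *ᵥ 1 = 1) (u : ι → R) :
    P * replicateRow ι u = replicateRow ι u := by
  rw [← one_vecMulVec, mul_vecMulVec, hP]

lemma sum_vecMul_of_mulVec_one (hP : P *ᵥ 1 = 1) (x : ι → R) : ∑ j, (x ᵥ* P) j = ∑ i, x i := by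
  rw [← dotProduct_one, ← dotProduct_mulVec, hP, dotProduct_one]

theorem exists_isUnit_conj_eq_add_replicateRow_mul_one_sub [DecidableEq ι] {w v : ι → R}
    (hP : P *ᵥ 1 = 1) (hw : w ᵥ* P = w) (hwv : ∑ i, w i = ∑ i, v i) :
    ∃ M : Matrix ι ι R, IsUnit M ∧ P + replicateRow ι v * (1 - P) = M * P * M⁻¹ := by
  set N := replicateRow ι (w - v) with hN_def
  have hN : N * N = 0 := by
    rw [replicateRow_mul_replicateRow]
    simp [sum_sub_distrib, hwv]
  have hinv : (1 + N) * (1 - N) = 1 := by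
    calc (1 + N) * (1 - N) = 1 - N * N := by noncomm_ring
      _ = 1 := by rw [hN, sub_zero]
  refine ⟨1 + N, IsUnit.of_mul_eq_one _ hinv, ?_⟩
  symm
  calc (1 + N) * P * (1 + N)⁻¹ = P + N * P - P * N - N * (P * N) := by
        rw [inv_eq_right_inv hinv]; noncomm_ring
    _ = P + replicateRow ι v * (1 - P) := by
      rw [mul_replicateRow_of_mulVec_one hP, hN, hN_def, ← replicateRow_vecMul, sub_vecMul, hw,
        mul_sub, mul_one, ← replicateRow_vecMul]
      simp only [replicateRow_sub]
      abel

end CommRing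

section LinearOrderedField

variable {ι 𝕜 : Type*} [Fintype ι] [Field 𝕜] [LinearOrder 𝕜] [IsStrictOrderedRing 𝕜]
  {P : Matrix ι ι 𝕜}

lemma sum_ne_zero_of_vecMul_eq_self (hpos : ∀ i j, 0 < P i j) (hP : P *ᵥ 1 = 1) {w : ι → 𝕜}
    (hw : w ᵥ* P = w) (hw0 : w ≠ 0) : ∑ i, w i ≠ 0 := by
  intro hsum
  obtain ⟨k, hk⟩ := Function.ne_iff.mp hw0
  obtain ⟨p, -, hp⟩ := exists_pos_of_sum_zero_of_exists_nonzero w hsum ⟨k, mem_univ _, hk⟩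
  obtain ⟨q, -, hq⟩ := exists_pos_of_sum_zero_of_exists_nonzero (-w) (by simp [hsum])
    ⟨k, mem_univ _, by simpa using hk⟩
  have hlt (j : ι) : |w j| < (|w| ᵥ* P) j :=
    calc |w j| = |∑ i, w i * P i j| := congrArg abs (congrFun hw j).symm
      _ < ∑ i, |w i * P i j| := abs_sum_lt_sum_abs ⟨p, mem_univ _, mul_pos hp (hpos p j)⟩
          ⟨q, mem_univ _, mul_neg_of_neg_of_pos (by simpa using hq) (hpos q j)⟩
      _ = (|w| ᵥ* P) j := by simp [vecMul, dotProduct, abs_mul, abs_of_pos (hpos _ _)]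
  have := sum_lt_sum_of_nonempty ⟨p, mem_univ _⟩ fun j _ => hlt j
  rw [sum_vecMul_of_mulVec_one hP] at this
  exact lt_irrefl _ this

theorem exists_vecMul_eq_self_sum_eq_one [Nonempty ι] [DecidableEq ι] (hpos : ∀ i j, 0 < P i j)
    (hP : P *ᵥ 1 = 1) : ∃ w : ι → 𝕜, w ᵥ* P = w ∧ ∑ i, w i = 1 := by
  have hdet : (P - 1).det = 0 := by
    rw [← exists_mulVec_eq_zero_iff]
    exact ⟨1, one_ne_zero, by rw [sub_mulVec, hP, one_mulVec, sub_self]⟩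
  obtain ⟨w, hw0, hw⟩ := exists_vecMul_eq_zero_iff.mpr hdet
  rw [vecMul_sub, vecMul_one, sub_eq_zero] at hw
  refine ⟨(∑ i, w i)⁻¹ • w, by rw [smul_vecMul, hw], ?_⟩
  simp [← mul_sum, inv_mul_cancel₀ (sum_ne_zero_of_vecMul_eq_self hpos hP hw hw0)]

end LinearOrderedField

end Matrix

theorem stmt0_general {n : ℕ} (P : Matrix (Fin n) (Fin n) ℝ)
    (hpos : ∀ i j, 0 < P i j) (hrow : ∀ i, ∑ j, P i j = 1)
    (v : Fin n → ℝ) (hvsum : ∑ j, v j = 1) :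
    ∃ M : Matrix (Fin n) (Fin n) ℝ, IsUnit M ∧
      P + Jmat v * (1 - P) = M * P * M⁻¹ := by
  have hP : P *ᵥ 1 = 1 := funext fun i => by simp [mulVec, dotProduct, hrow]
  have : Nonempty (Fin n) := by
    by_contra h
    simp [not_nonempty_iff.mp h] at hvsum
  obtain ⟨w, hw, hw1⟩ := exists_vecMul_eq_self_sum_eq_one hpos hP
  exact exists_isUnit_conj_eq_add_replicateRow_mul_one_sub hP hw (hw1.trans hvsum.symm)

/-- If `P` is an `n × n` positive stochastic real matrix and `v` lies in the
open simplex `Δ^{n-1}_+`, then `P + J_v (I - P)` is similar over `ℝ` to `P`. -/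
theorem stmt0 {n : ℕ} (P : Matrix (Fin n) (Fin n) ℝ)
    (hpos : ∀ i j, 0 < P i j) (hrow : ∀ i, ∑ j, P i j = 1)
    (v : Fin n → ℝ) (hv : ∀ j, 0 < v j) (hvsum : ∑ j, v j = 1) :
    ∃ M : Matrix (Fin n) (Fin n) ℝ, IsUnit M ∧
      P + Jmat v * (1 - P) = M * P * M⁻¹ :=
  stmt0_general P hpos hrow v hvsum
end

section
/- Let P be an n×n positive stochastic real matrix with left Perron eigenvector l (so l ∈ Δ^{n-1}_+ and lP = l), and let v ∈ Δ^{n-1}_+. Then the matrix X = I_n − J_l − J_v satisfies X² = I_n and X P X⁻¹ = P + J_v(I_n − P). -/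
/-! With `J_l P = J_l`, `P J_l = J_l`, `P J_v = J_v`, `J_l J_v = J_v` and `J_v J_l = J_l`, both
identities are pure ring computations: `J_l` and `J_v` are idempotents with the same kernel, so
`X = 1 - J_l - J_v` squares to `1`, and `X P X` collapses to `P + J_v - J_v P`. -/

open Matrix BigOperators

section Ring

variable {R : Type*} [Ring R] {a b : R}

theorem isIdempotentElem_of_mul_eq_right_of_mul_eq_left (hab : a * b = b) (hba : b * a = a) :
    IsIdempotentElem a := by
  simpa only [IsIdempotentElem, mul_assoc, hba] using congrArg (· * a) hab

theorem mul_self_one_sub_sub_eq_one (hab : a * b = b) (hba : b * a = a) :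
    (1 - a - b) * (1 - a - b) = 1 := by
  have ha := isIdempotentElem_of_mul_eq_right_of_mul_eq_left hab hba
  have hb := isIdempotentElem_of_mul_eq_right_of_mul_eq_left hba hab
  simp only [mul_sub, sub_mul, one_mul, mul_one, ha.eq, hb.eq, hab, hba]
  abel

theorem one_sub_sub_mul_mul_one_sub_sub {p : R} (hab : a * b = b) (hba : b * a = a)
    (hpa : p * a = a) (hpb : p * b = b) (hap : a * p = a) :
    (1 - a - b) * p * (1 - a - b) = p + b * (1 - p) := by
  have ha := isIdempotentElem_of_mul_eq_right_of_mul_eq_left hab hba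
  have hb := isIdempotentElem_of_mul_eq_right_of_mul_eq_left hba hab
  have hbpa : b * p * a = a := by rw [mul_assoc, hpa, hba]
  have hbpb : b * p * b = b := by rw [mul_assoc, hpb, hb.eq]
  simp only [mul_sub, sub_mul, one_mul, mul_one, hap, hpa, hpb, ha.eq, hab, hbpa, hbpb]
  abel

end Ring

section Jmat

variable {n : ℕ}

theorem Jmat_mul (u : Fin n → ℝ) (M : Matrix (Fin n) (Fin n) ℝ) :
    Jmat u * M = Jmat (u ᵥ* M) := by
  ext i j
  simp [Jmat, mul_apply, vecMul, dotProduct]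

theorem mul_Jmat_of_sum_row_eq_one {M : Matrix (Fin n) (Fin n) ℝ} (hM : ∀ i, ∑ j, M i j = 1)
    (w : Fin n → ℝ) : M * Jmat w = Jmat w := by
  ext i j
  simp [Jmat, mul_apply, ← Finset.sum_mul, hM]

theorem Jmat_mul_Jmat {u : Fin n → ℝ} (hu : ∑ j, u j = 1) (w : Fin n → ℝ) :
    Jmat u * Jmat w = Jmat w :=
  mul_Jmat_of_sum_row_eq_one (fun _ => by simpa [Jmat] using hu) w

end Jmat

theorem stmt1_general {n : ℕ} (P : Matrix (Fin n) (Fin n) ℝ)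
    (hrow : ∀ i, ∑ j, P i j = 1)
    (l : Fin n → ℝ) (hlsum : ∑ j, l j = 1)
    (hperron : ∀ j, ∑ i, l i * P i j = l j)
    (v : Fin n → ℝ) (hvsum : ∑ j, v j = 1)
    (X : Matrix (Fin n) (Fin n) ℝ) (hX : X = 1 - Jmat l - Jmat v) :
    X ^ 2 = 1 ∧ X * P * X⁻¹ = P + Jmat v * (1 - P) := by
  have hlv := Jmat_mul_Jmat hlsum v
  have hvl := Jmat_mul_Jmat hvsum l
  have hXX : X * X = 1 := hX ▸ mul_self_one_sub_sub_eq_one hlv hvl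
  have hlP : Jmat l * P = Jmat l := by
    rw [Jmat_mul, show l ᵥ* P = l from funext hperron]
  refine ⟨by rw [sq, hXX], ?_⟩
  rw [inv_eq_right_inv hXX, hX]
  exact one_sub_sub_mul_mul_one_sub_sub hlv hvl (mul_Jmat_of_sum_row_eq_one hrow l)
    (mul_Jmat_of_sum_row_eq_one hrow v) hlP

/-- If `P` is an `n × n` positive stochastic real matrix with left Perron
eigenvector `l`, and `v ∈ Δ^{n-1}_+`, then `X = I - J_l - J_v` satisfies `X² = I` and
`X P X⁻¹ = P + J_v (I - P)`. -/
theorem stmt1 {n : ℕ} (P : Matrix (Fin n) (Fin n) ℝ)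
    (hpos : ∀ i j, 0 < P i j) (hrow : ∀ i, ∑ j, P i j = 1)
    (l : Fin n → ℝ) (hl : ∀ j, 0 < l j) (hlsum : ∑ j, l j = 1)
    (hperron : ∀ j, ∑ i, l i * P i j = l j)
    (v : Fin n → ℝ) (hv : ∀ j, 0 < v j) (hvsum : ∑ j, v j = 1)
    (X : Matrix (Fin n) (Fin n) ℝ) (hX : X = 1 - Jmat l - Jmat v) :
    X ^ 2 = 1 ∧ X * P * X⁻¹ = P + Jmat v * (1 - P) :=
  stmt1_general P hrow l hlsum hperron v hvsum X hX
end

section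
/- Let 𝕌 be a subfield of ℝ and let P be an n×n positive stochastic matrix with entries in 𝕌. If the matrix P + J_n(I_n − P) is positive, then P is similar over 𝕌 to a positive doubly stochastic matrix Q, and P is strong shift equivalent over 𝕌₊ to Q through a chain consisting entirely of n×n matrices. -/
open Matrix BigOperators

/-- Elementary strong shift equivalence between `n × n` real matrices, with all entries of the
connecting matrices lying in the set `S ⊆ ℝ`. -/
def ESSEn (S : Set ℝ) {n : ℕ} (A B : Matrix (Fin n) (Fin n) ℝ) : Prop :=
  ∃ U V : Matrix (Fin n) (Fin n) ℝ,
    (∀ i j, U i j ∈ S) ∧ (∀ i j, V i j ∈ S) ∧ A = U * V ∧ B = V * U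

/-- Strong shift equivalence through matrices of the same size `n`: a finite chain of
elementary strong shift equivalences, all between `n × n` matrices. -/
def SSEn (S : Set ℝ) {n : ℕ} (A B : Matrix (Fin n) (Fin n) ℝ) : Prop :=
  Relation.ReflTransGen (ESSEn S) A B

/-- `A` and `B` are similar via a conjugating matrix invertible over `U ⊆ ℝ`. -/
def SimilarOver (U : Set ℝ) {n : ℕ} (A B : Matrix (Fin n) (Fin n) ℝ) : Prop :=
  ∃ M : Matrix (Fin n) (Fin n) ℝ, IsUnit M ∧ (∀ i j, M i j ∈ U) ∧
    (∀ i j, M⁻¹ i j ∈ U) ∧ B = M * A * M⁻¹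

/-- `Jconst n` is the `n × n` matrix all of whose entries are `1/n`. -/
noncomputable def Jconst (n : ℕ) : Matrix (Fin n) (Fin n) ℝ :=
  Matrix.of fun _ _ => (1 : ℝ) / n

/-! Write `𝟙 gᵀ` for `vecMulVec 1 g`, the matrix all of whose rows equal `g`. For stochastic `P`,
`Jₙ (1 - P) = 𝟙 gᵀ` where `g = colDefect P` has entries `(1 - ∑ᵢ Pᵢⱼ) / n` and sum `0`, so
`Q = P + 𝟙 gᵀ` is doubly stochastic. The stationary distribution `w` of `P` is a normalised kernel
vector of `(1 - P)ᵀ`, so its entries lie in the field of entries of `P`, and it is nonnegative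
because `P` is positive. Conjugation by `1 + 𝟙 (w - 𝟙/n)ᵀ` turns `P` into `Q`.

For the shift equivalence, follow `A τ = P + τ 𝟙 gᵀ` from `τ = 0` to `τ = 1` in steps shorter than
the smallest entry of `P` and `Q`. With `u = 𝟙 - w ≥ 0`, `B = A τ` factors as `V U` with
`U = 1 + γ 𝟙 uᵀ` and `V = B - β 𝟙 uᵀ` nonnegative, while `U V = B - γ 𝟙 (u - u B)ᵀ`; since `w` is
stationary, `u - u B` is a multiple of `g`, and `β, γ` can be chosen so that `U V = A τ'`.
All of this works over any Archimedean ordered field, in particular over `𝕌` itself. -/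

def NonnegESSE {ι R : Type*} [Fintype ι] [Semiring R] [PartialOrder R]
    (A B : Matrix ι ι R) : Prop :=
  ∃ U V : Matrix ι ι R, (∀ i j, 0 ≤ U i j) ∧ (∀ i j, 0 ≤ V i j) ∧ A = U * V ∧ B = V * U

namespace Matrix

variable {ι K : Type*} [Fintype ι] [DecidableEq ι]

section CommRing

variable [CommRing K]

omit [DecidableEq ι] in
lemma mulVec_one_add_smul_vecMulVec {P : Matrix ι ι K} (hP : P *ᵥ 1 = 1) {g : ι → K}
    (hg : g ⬝ᵥ 1 = 0) (τ : K) : (P + τ • vecMulVec 1 g) *ᵥ 1 = 1 := by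
  rw [add_mulVec, smul_mulVec, vecMulVec_mulVec, hg, hP, MulOpposite.op_zero, zero_smul,
    smul_zero, add_zero]

omit [DecidableEq ι] in
lemma one_sub_dotProduct_one {w : ι → K} (hw1 : w ⬝ᵥ 1 = 1) :
    (1 - w) ⬝ᵥ 1 = (Fintype.card ι : K) - 1 := by
  rw [sub_dotProduct, one_dotProduct_one, hw1]

lemma one_add_vecMulVec_mul_one_sub_vecMulVec {v : ι → K} (hv : v ⬝ᵥ 1 = 0) :
    (1 + vecMulVec 1 v : Matrix ι ι K) * (1 - vecMulVec 1 v) = 1 := by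
  rw [add_mul, mul_sub, mul_sub, one_mul, mul_one, one_mul, vecMulVec_mul_vecMulVec, hv,
    zero_smul, vecMulVec_zero]
  abel

lemma one_add_vecMulVec_mul_mul_one_sub_vecMulVec {P : Matrix ι ι K} (hP : P *ᵥ 1 = 1)
    {v : ι → K} (hv : v ⬝ᵥ 1 = 0) :
    (1 + vecMulVec 1 v) * P * (1 - vecMulVec 1 v) = P + vecMulVec 1 (v ᵥ* P - v) := by
  have hvP : (v ᵥ* P) ⬝ᵥ 1 = 0 := by rw [← dotProduct_mulVec, hP, hv]
  rw [add_mul, one_mul, vecMulVec_mul, mul_sub, mul_one, add_mul, mul_vecMulVec, hP,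
    vecMulVec_mul_vecMulVec, hvP, zero_smul, vecMulVec_zero, vecMulVec_sub]
  abel

lemma sub_smul_vecMulVec_mul_one_add_smul_vecMulVec {B : Matrix ι ι K} (hB : B *ᵥ 1 = 1)
    {u : ι → K} {β γ : K} (h : γ * (1 - β * (u ⬝ᵥ 1)) = β) :
    (B - β • vecMulVec 1 u) * (1 + γ • vecMulVec 1 u) = B := by
  simp only [sub_mul, mul_add, mul_one, Matrix.mul_smul, mul_vecMulVec, hB, smul_mulVec,
    vecMulVec_mulVec, op_smul_eq_smul, smul_vecMulVec, smul_smul]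
  linear_combination (norm := module) h • vecMulVec 1 u

lemma one_add_smul_vecMulVec_mul_sub_smul_vecMulVec (B : Matrix ι ι K) {u : ι → K} {β γ : K}
    (h : γ * (1 - β * (u ⬝ᵥ 1)) = β) :
    (1 + γ • vecMulVec 1 u) * (B - β • vecMulVec 1 u) = B - γ • vecMulVec 1 (u - u ᵥ* B) := by
  simp only [add_mul, mul_sub, one_mul, Matrix.mul_smul, Matrix.smul_mul, vecMulVec_mul,
    vecMul_vecMulVec, vecMulVec_smul, smul_smul, vecMulVec_sub]
  linear_combination (norm := module) h • vecMulVec 1 u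

end CommRing

section Field

variable [Field K]

def colDefect (P : Matrix ι ι K) : ι → K :=
  (Fintype.card ι : K)⁻¹ • (1 ᵥ* (1 - P))

lemma colDefect_dotProduct_one {P : Matrix ι ι K} (hP : P *ᵥ 1 = 1) :
    P.colDefect ⬝ᵥ 1 = 0 := by
  rw [colDefect, smul_dotProduct, ← dotProduct_mulVec, sub_mulVec, one_mulVec, hP, sub_self,
    dotProduct_zero, smul_zero]

lemma card_smul_colDefect [CharZero K] [Nonempty ι] (P : Matrix ι ι K) :
    (Fintype.card ι : K) • P.colDefect = 1 ᵥ* (1 - P) :=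
  smul_inv_smul₀ (Nat.cast_ne_zero.2 Fintype.card_ne_zero) _

lemma one_vecMul_add_vecMulVec_colDefect [CharZero K] [Nonempty ι] (P : Matrix ι ι K) :
    1 ᵥ* (P + vecMulVec 1 P.colDefect) = 1 := by
  rw [vecMul_add, vecMul_vecMulVec, one_dotProduct_one, card_smul_colDefect, vecMul_sub,
    vecMul_one, add_sub_cancel]

lemma exists_mul_mul_eq_add_vecMulVec_colDefect [CharZero K] [Nonempty ι] {P : Matrix ι ι K}
    (hP : P *ᵥ 1 = 1) {w : ι → K} (hw1 : w ⬝ᵥ 1 = 1) (hwP : w ᵥ* P = w) :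
    ∃ M N : Matrix ι ι K, M * N = 1 ∧ M * P * N = P + vecMulVec 1 P.colDefect := by
  have hn : (Fintype.card ι : K) ≠ 0 := Nat.cast_ne_zero.2 Fintype.card_ne_zero
  have hv : (w - (Fintype.card ι : K)⁻¹ • 1) ⬝ᵥ 1 = 0 := by
    rw [sub_dotProduct, smul_dotProduct, one_dotProduct_one, hw1, smul_eq_mul,
      inv_mul_cancel₀ hn, sub_self]
  have hvP : (w - (Fintype.card ι : K)⁻¹ • 1) ᵥ* P - (w - (Fintype.card ι : K)⁻¹ • 1) =
      P.colDefect := by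
    rw [sub_vecMul, smul_vecMul, hwP, colDefect, vecMul_sub, vecMul_one, smul_sub]
    abel
  exact ⟨_, _, one_add_vecMulVec_mul_one_sub_vecMulVec hv, by
    rw [one_add_vecMulVec_mul_mul_one_sub_vecMulVec hP hv, hvP]⟩

lemma mulVec_one_add_vecMulVec_colDefect {P : Matrix ι ι K} (hP : P *ᵥ 1 = 1) :
    (P + vecMulVec 1 P.colDefect) *ᵥ 1 = 1 := by
  simpa using mulVec_one_add_smul_vecMulVec hP (colDefect_dotProduct_one hP) 1

lemma map_colDefect {L : Type*} [Field L] (f : K →+* L) (P : Matrix ι ι K) :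
    f ∘ P.colDefect = (P.map f).colDefect := by
  ext j
  simp [colDefect, RingHom.map_vecMul, Matrix.map_sub]

lemma map_add_vecMulVec_colDefect {L : Type*} [Field L] (f : K →+* L) (P : Matrix ι ι K) :
    (P + vecMulVec 1 P.colDefect).map f = P.map f + vecMulVec 1 (P.map f).colDefect := by
  rw [← map_colDefect]
  ext i j
  simp

end Field

section LinearOrderedField

variable [Field K] [LinearOrder K] [IsStrictOrderedRing K] {P : Matrix ι ι K}

omit [DecidableEq ι] in
lemma vecMul_abs_eq_abs (hP : P *ᵥ 1 = 1) (hP0 : ∀ i j, 0 ≤ P i j) {x : ι → K}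
    (hx : x ᵥ* P = x) : |x| ᵥ* P = |x| := by
  have hle : ∀ j, |x| j ≤ (|x| ᵥ* P) j := fun j => by
    calc |x| j = |(x ᵥ* P) j| := by rw [hx, Pi.abs_apply]
      _ ≤ ∑ i, |x i * P i j| := Finset.abs_sum_le_sum_abs _ _
      _ = (|x| ᵥ* P) j := by simp [vecMul, dotProduct, abs_mul, abs_of_nonneg (hP0 _ _)]
  have hsum : ∑ j, |x| j = ∑ j, (|x| ᵥ* P) j := by
    rw [← dotProduct_one, ← dotProduct_one, ← dotProduct_mulVec, hP]
  funext j
  exact ((Finset.sum_eq_sum_iff_of_le fun j _ => hle j).1 hsum j (Finset.mem_univ j)).symm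

omit [DecidableEq ι] in
lemma pos_of_vecMul_eq (hP : ∀ i j, 0 < P i j) {z : ι → K} (hz0 : 0 ≤ z)
    (hz : z ᵥ* P = z) {q : ι} (hq : 0 < z q) (j : ι) : 0 < z j := by
  rw [← hz]
  exact lt_of_lt_of_le (mul_pos hq (hP q j)) <|
    Finset.single_le_sum (f := fun i => z i * P i j) (fun i _ => mul_nonneg (hz0 i) (hP i j).le)
      (Finset.mem_univ q)

omit [DecidableEq ι] in
lemma neg_of_vecMul_eq (hP : P *ᵥ 1 = 1) (hpos : ∀ i j, 0 < P i j) {x : ι → K}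
    (hx : x ᵥ* P = x) {q : ι} (hq : x q < 0) (j : ι) : x j < 0 := by
  have hz : (|x| - x) ᵥ* P = |x| - x := by
    rw [sub_vecMul, vecMul_abs_eq_abs hP (fun i j => (hpos i j).le) hx, hx]
  have hzq : 0 < (|x| - x) q := by simp [abs_of_neg hq, hq]
  have hzj := pos_of_vecMul_eq hpos (fun i => sub_nonneg.2 (le_abs_self (x i))) hz hzq j
  rw [sub_pos] at hzj
  exact lt_of_not_ge fun h => hzj.ne' (abs_of_nonneg h)

lemma exists_stationary [Nonempty ι] (hP : P *ᵥ 1 = 1) (hpos : ∀ i j, 0 < P i j) :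
    ∃ w : ι → K, 0 ≤ w ∧ w ⬝ᵥ 1 = 1 ∧ w ᵥ* P = w := by
  have hdet : (1 - P).det = 0 :=
    exists_mulVec_eq_zero_iff.1 ⟨1, one_ne_zero, by rw [sub_mulVec, one_mulVec, hP, sub_self]⟩
  obtain ⟨x, hx0, hx⟩ := exists_vecMul_eq_zero_iff.2 hdet
  rw [vecMul_sub, vecMul_one, sub_eq_zero, eq_comm] at hx
  obtain ⟨y, hy0, hyne, hy⟩ : ∃ y : ι → K, 0 ≤ y ∧ y ≠ 0 ∧ y ᵥ* P = y := by
    by_cases hneg : ∃ q, x q < 0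
    · obtain ⟨q, hq⟩ := hneg
      refine ⟨-x, fun j => ?_, neg_ne_zero.2 hx0, by rw [neg_vecMul, hx]⟩
      simpa using (neg_of_vecMul_eq hP hpos hx hq j).le
    · exact ⟨x, fun j => not_lt.1 fun h => hneg ⟨j, h⟩, hx0, hx⟩
  have hsum : 0 < y ⬝ᵥ 1 := by
    obtain ⟨q, hq⟩ := Function.ne_iff.1 hyne
    rw [dotProduct_one]
    exact Finset.sum_pos' (fun i _ => hy0 i) ⟨q, Finset.mem_univ q, (hy0 q).lt_of_ne' hq⟩
  refine ⟨(y ⬝ᵥ 1)⁻¹ • y, smul_nonneg (inv_nonneg.2 hsum.le) hy0, ?_, by rw [smul_vecMul, hy]⟩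
  rw [smul_dotProduct, smul_eq_mul, inv_mul_cancel₀ hsum.ne']

lemma exists_shift_coeffs {n τ' τ : K} (hn : 1 ≤ n) (hτ'τ : τ' ≤ τ) (hτ : τ ≤ 1) :
    ∃ β γ : K, 0 ≤ β ∧ β ≤ τ - τ' ∧ 0 ≤ γ ∧ γ * (1 - β * (n - 1)) = β ∧
      γ * (n - τ * (n - 1)) = τ - τ' := by
  have hd : 1 ≤ n - τ * (n - 1) := by nlinarith
  have hγ0 : 0 ≤ (τ - τ') / (n - τ * (n - 1)) := div_nonneg (sub_nonneg.2 hτ'τ) (by linarith)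
  have hγ : (τ - τ') / (n - τ * (n - 1)) ≤ τ - τ' := div_le_self (sub_nonneg.2 hτ'τ) hd
  set γ := (τ - τ') / (n - τ * (n - 1))
  have hγn : 1 ≤ 1 + γ * (n - 1) := le_add_of_nonneg_right (mul_nonneg hγ0 (by linarith))
  refine ⟨γ / (1 + γ * (n - 1)), γ, div_nonneg hγ0 (by linarith),
    (div_le_self hγ0 hγn).trans hγ, hγ0, ?_, div_mul_cancel₀ _ (by linarith)⟩
  field_simp
  ring

lemma sub_vecMul_add_smul_vecMulVec_colDefect [Nonempty ι] {w : ι → K} (hw1 : w ⬝ᵥ 1 = 1)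
    (hwP : w ᵥ* P = w) (τ : K) :
    (1 - w) - (1 - w) ᵥ* (P + τ • vecMulVec 1 P.colDefect) =
      ((Fintype.card ι : K) - τ * ((Fintype.card ι : K) - 1)) • P.colDefect := by
  have hu : (1 - w) ᵥ* (1 - P) = (Fintype.card ι : K) • P.colDefect := by
    rw [card_smul_colDefect, sub_vecMul, vecMul_sub 1 P w, vecMul_one, hwP, sub_self, sub_zero]
  calc (1 - w) - (1 - w) ᵥ* (P + τ • vecMulVec 1 P.colDefect)
      = (1 - w) ᵥ* (1 - P) - τ • ((1 - w) ⬝ᵥ 1) • P.colDefect := by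
        rw [vecMul_sub, vecMul_one, vecMul_add, vecMul_smul, vecMul_vecMulVec]
        abel
    _ = _ := by
        rw [one_sub_dotProduct_one hw1, hu]
        module

lemma nonnegESSE_add_smul_vecMulVec_colDefect [Nonempty ι] (hP : P *ᵥ 1 = 1) {w : ι → K}
    (hw0 : 0 ≤ w) (hw1 : w ⬝ᵥ 1 = 1) (hwP : w ᵥ* P = w) {τ' τ : K} (hτ'τ : τ' ≤ τ) (hτ : τ ≤ 1)
    (hmin : ∀ i j, τ - τ' ≤ (P + τ • vecMulVec 1 P.colDefect : Matrix ι ι K) i j) :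
    NonnegESSE (P + τ' • vecMulVec 1 P.colDefect) (P + τ • vecMulVec 1 P.colDefect) := by
  set B := P + τ • vecMulVec 1 P.colDefect
  obtain ⟨β, γ, hβ0, hβ, hγ0, hγβ, hγ⟩ :=
    exists_shift_coeffs (Nat.one_le_cast.2 (Fintype.card_pos (α := ι))) hτ'τ hτ
  rw [← one_sub_dotProduct_one hw1] at hγβ
  have hwle : ∀ j, w j ≤ 1 := fun j => by
    rw [← hw1, dotProduct_one]
    exact Finset.single_le_sum (fun i _ => hw0 i) (Finset.mem_univ j)
  refine ⟨1 + γ • vecMulVec 1 (1 - w), B - β • vecMulVec 1 (1 - w), fun i j => ?_,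
    fun i j => ?_, ?_, ?_⟩
  · have h1 : (0 : K) ≤ (1 : Matrix ι ι K) i j := by
      rw [one_apply]
      split_ifs <;> norm_num
    simpa [vecMulVec_apply] using add_nonneg h1 (mul_nonneg hγ0 (sub_nonneg.2 (hwle j)))
  · have h1 : β * (1 - w j) ≤ β := mul_le_of_le_one_right hβ0 (sub_le_self _ (hw0 j))
    simpa [vecMulVec_apply] using (by linarith [hmin i j] : 0 ≤ B i j - β * (1 - w j))
  · rw [one_add_smul_vecMulVec_mul_sub_smul_vecMulVec B hγβ,
      sub_vecMul_add_smul_vecMulVec_colDefect hw1 hwP, vecMulVec_smul, smul_smul, hγ]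
    module
  · exact (sub_smul_vecMulVec_mul_one_add_smul_vecMulVec
      (mulVec_one_add_smul_vecMulVec hP (colDefect_dotProduct_one hP) τ) hγβ).symm

omit [Fintype ι] [DecidableEq ι] in
lemma le_add_smul_vecMulVec_apply {g : ι → K} {m₀ τ : K} (hτ0 : 0 ≤ τ) (hτ1 : τ ≤ 1) {i j : ι}
    (hP : m₀ ≤ P i j) (hQ : m₀ ≤ (P + vecMulVec 1 g : Matrix ι ι K) i j) :
    m₀ ≤ (P + τ • vecMulVec 1 g : Matrix ι ι K) i j := by
  simp only [add_apply, smul_apply, vecMulVec_apply, Pi.one_apply, one_mul, smul_eq_mul] at *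
  nlinarith

lemma reflTransGen_nonnegESSE_add_vecMulVec_colDefect [Archimedean K] [Nonempty ι]
    (hP : P *ᵥ 1 = 1) (hpos : ∀ i j, 0 < P i j)
    (hQpos : ∀ i j, 0 < (P + vecMulVec 1 P.colDefect : Matrix ι ι K) i j)
    {w : ι → K} (hw0 : 0 ≤ w) (hw1 : w ⬝ᵥ 1 = 1) (hwP : w ᵥ* P = w) :
    Relation.ReflTransGen NonnegESSE P (P + vecMulVec 1 P.colDefect) := by
  obtain ⟨m₀, hm₀, hm₀P, hm₀Q⟩ : ∃ m₀ : K, 0 < m₀ ∧ (∀ i j, m₀ ≤ P i j) ∧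
      ∀ i j, m₀ ≤ (P + vecMulVec 1 P.colDefect : Matrix ι ι K) i j := by
    obtain ⟨p, hp⟩ := Finite.exists_min fun p : ι × ι =>
      min (P p.1 p.2) ((P + vecMulVec 1 P.colDefect : Matrix ι ι K) p.1 p.2)
    exact ⟨_, lt_min (hpos _ _) (hQpos _ _), fun i j => (hp (i, j)).trans (min_le_left _ _),
      fun i j => (hp (i, j)).trans (min_le_right _ _)⟩
  obtain ⟨m, hm⟩ := exists_nat_one_div_lt hm₀
  have hm1 : (0 : K) < m + 1 := by positivity
  let A : ℕ → Matrix ι ι K := fun k => P + ((k : K) / (m + 1)) • vecMulVec 1 P.colDefect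
  have hchain : Relation.ReflTransGen (fun k l => NonnegESSE (A k) (A l)) 0 (m + 1) := by
    refine reflTransGen_of_succ_of_le _ (fun k hk => ?_) (Nat.zero_le _)
    have hk1 : ((k + 1 : ℕ) : K) ≤ m + 1 := by exact_mod_cast hk.2
    have hτ : ((k + 1 : ℕ) : K) / (m + 1) - (k : K) / (m + 1) = 1 / (m + 1) := by
      push_cast
      ring
    rw [Order.succ_eq_add_one]
    refine nonnegESSE_add_smul_vecMulVec_colDefect hP hw0 hw1 hwP
      (div_le_div_of_nonneg_right (by simp) hm1.le) ((div_le_one hm1).2 hk1) fun i j => ?_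
    rw [hτ]
    exact hm.le.trans (le_add_smul_vecMulVec_apply (by positivity) ((div_le_one hm1).2 hk1)
      (hm₀P i j) (hm₀Q i j))
  have hA0 : A 0 = P := by simp [A]
  have hAm : A (m + 1) = P + vecMulVec 1 P.colDefect := by simp [A, hm1.ne']
  rw [← hAm]
  nth_rw 1 [← hA0]
  exact hchain.lift A fun _ _ h => h

end LinearOrderedField

end Matrix

section Subfield

variable {n : ℕ} (𝕌 : Subfield ℝ)

lemma forall_sum_map_subtype_row_eq_one_iff {A : Matrix (Fin n) (Fin n) 𝕌} :
    (∀ i, ∑ j, A.map 𝕌.subtype i j = 1) ↔ A *ᵥ 1 = 1 := by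
  simp [funext_iff, mulVec, dotProduct, Subtype.ext_iff]

lemma forall_sum_map_subtype_col_eq_one_iff {A : Matrix (Fin n) (Fin n) 𝕌} :
    (∀ j, ∑ i, A.map 𝕌.subtype i j = 1) ↔ 1 ᵥ* A = 1 := by
  simp [funext_iff, vecMul, dotProduct, Subtype.ext_iff]

lemma ESSEn_map_subtype {A B : Matrix (Fin n) (Fin n) 𝕌} (h : NonnegESSE A B) :
    ESSEn {x : ℝ | x ∈ 𝕌 ∧ 0 ≤ x} (A.map 𝕌.subtype) (B.map 𝕌.subtype) := by
  obtain ⟨U, V, hU, hV, rfl, rfl⟩ := h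
  exact ⟨U.map 𝕌.subtype, V.map 𝕌.subtype, fun i j => ⟨(U i j).2, hU i j⟩,
    fun i j => ⟨(V i j).2, hV i j⟩, Matrix.map_mul, Matrix.map_mul⟩

lemma SSEn_map_subtype {A B : Matrix (Fin n) (Fin n) 𝕌}
    (h : Relation.ReflTransGen NonnegESSE A B) :
    SSEn {x : ℝ | x ∈ 𝕌 ∧ 0 ≤ x} (A.map 𝕌.subtype) (B.map 𝕌.subtype) :=
  Relation.ReflTransGen.lift (fun A : Matrix (Fin n) (Fin n) 𝕌 => A.map 𝕌.subtype)
    (fun _ _ => ESSEn_map_subtype 𝕌) A B h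

lemma similarOver_map_subtype {A B M N : Matrix (Fin n) (Fin n) 𝕌} (hMN : M * N = 1)
    (h : M * A * N = B) :
    SimilarOver 𝕌 (A.map 𝕌.subtype) (B.map 𝕌.subtype) := by
  have hMN' : M.map 𝕌.subtype * N.map 𝕌.subtype = 1 := by
    rw [← Matrix.map_mul, hMN, Matrix.map_one _ (map_zero _) (map_one _)]
  refine ⟨M.map 𝕌.subtype, ?_, fun i j => (M i j).2, ?_, ?_⟩
  · exact (isUnit_iff_isUnit_det _).2 (isUnit_det_of_right_inverse hMN')
  · rw [inv_eq_right_inv hMN']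
    exact fun i j => (N i j).2
  · rw [inv_eq_right_inv hMN', ← h, Matrix.map_mul, Matrix.map_mul]

end Subfield

lemma Jconst_mul_one_sub {n : ℕ} (P : Matrix (Fin n) (Fin n) ℝ) :
    Jconst n * (1 - P) = vecMulVec 1 P.colDefect := by
  have hJ : Jconst n = vecMulVec 1 ((n : ℝ)⁻¹ • 1) := by
    ext
    simp [Jconst, vecMulVec_apply]
  rw [hJ, vecMulVec_mul, smul_vecMul, colDefect, Fintype.card_fin]

/-- Let `𝕌` be a subfield of `ℝ` and `P` an `n × n` positive stochastic matrix
over `𝕌`. If `P + Jₙ(I - P)` is positive, then `P` is similar over `𝕌` to a positive doubly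
stochastic matrix `Q` over `𝕌`, and `P` is strong shift equivalent over `𝕌₊` to `Q` through
`n × n` matrices. -/
theorem stmt2 (𝕌 : Subfield ℝ) {n : ℕ} (P : Matrix (Fin n) (Fin n) ℝ)
    (hUP : ∀ i j, P i j ∈ 𝕌)
    (hpos : ∀ i j, 0 < P i j) (hrow : ∀ i, ∑ j, P i j = 1)
    (hQpos : ∀ i j, 0 < (P + Jconst n * (1 - P)) i j) :
    ∃ Q : Matrix (Fin n) (Fin n) ℝ,
      (∀ i j, Q i j ∈ 𝕌) ∧ (∀ i j, 0 < Q i j) ∧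
      (∀ i, ∑ j, Q i j = 1) ∧ (∀ j, ∑ i, Q i j = 1) ∧
      SimilarOver (𝕌 : Set ℝ) P Q ∧
      SSEn {x : ℝ | x ∈ 𝕌 ∧ 0 ≤ x} P Q := by
  rcases Nat.eq_zero_or_pos n with rfl | hn
  · exact ⟨P, hUP, hpos, hrow, finZeroElim, ⟨1, isUnit_one, finZeroElim, finZeroElim,
      Subsingleton.elim _ _⟩, .refl⟩
  have : Nonempty (Fin n) := ⟨⟨0, hn⟩⟩
  obtain ⟨P, rfl⟩ : ∃ P' : Matrix (Fin n) (Fin n) 𝕌, P'.map 𝕌.subtype = P :=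
    ⟨of fun i j => ⟨P i j, hUP i j⟩, rfl⟩
  rw [forall_sum_map_subtype_row_eq_one_iff] at hrow
  rw [Jconst_mul_one_sub, ← map_add_vecMulVec_colDefect] at hQpos
  obtain ⟨w, hw0, hw1, hwP⟩ := exists_stationary hrow hpos
  obtain ⟨M, N, hMN, hsim⟩ := exists_mul_mul_eq_add_vecMulVec_colDefect hrow hw1 hwP
  exact ⟨(P + vecMulVec 1 P.colDefect).map 𝕌.subtype, fun i j => Subtype.prop _, hQpos,
    (forall_sum_map_subtype_row_eq_one_iff 𝕌).2 (mulVec_one_add_vecMulVec_colDefect hrow),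
    (forall_sum_map_subtype_col_eq_one_iff 𝕌).2 (one_vecMul_add_vecMulVec_colDefect P),
    similarOver_map_subtype 𝕌 hMN hsim,
    SSEn_map_subtype 𝕌
      (reflTransGen_nonnegESSE_add_vecMulVec_colDefect hrow hpos hQpos hw0 hw1 hwP)⟩
end

section
/- Let 𝕌 be a subfield of ℝ. Every 2×2 positive stochastic matrix with entries in 𝕌 is similar over 𝕌 to a positive doubly stochastic matrix Q and is strong shift equivalent over 𝕌₊ to Q through a chain consisting entirely of 2×2 matrices. -/
/-!
A `2 × 2` stochastic matrix with second eigenvalue `l` is `l • 1 + 𝟙 π` for a row `π = (p, q)`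
with `p + q = 1 - l`, and this family is closed under products. Hence `P` is conjugate to the
symmetric member `Q` (`π = ((1 - l) / 2, (1 - l) / 2)`) by a unipotent `1 + e 𝟙 (1, -1)`, and a
factorization `A = U V`, `B = V U` inside the family is found by solving a linear system for the
rows of `U` and `V` once the product `α β = l` of their second eigenvalues is fixed; `U` and `V`
are then nonnegative under linear conditions. For `l ≤ 0` the choice `α = (1 - l) / 2` reaches `Q`
in one step. For `l > 0` one step can move `p` by `p q`, and `p q` only grows as `p` moves
towards `(1 - l) / 2`, so finitely many equal steps reach `Q`.
-/

open Matrix BigOperators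

theorem ESSEn.submatrix {S : Set ℝ} {n : ℕ} {A B : Matrix (Fin n) (Fin n) ℝ}
    (h : ESSEn S A B) (e : Fin n ≃ Fin n) : ESSEn S (A.submatrix e e) (B.submatrix e e) := by
  obtain ⟨U, V, hU, hV, rfl, rfl⟩ := h
  exact ⟨U.submatrix e e, V.submatrix e e, fun i j => hU _ _, fun i j => hV _ _,
    (submatrix_mul_equiv ..).symm, (submatrix_mul_equiv ..).symm⟩

/-- `α • 1` plus the matrix whose two rows both equal `(p, q)`. It has eigenvalue `α + p + q` on
`(1, 1)` and second eigenvalue `α`, so the `2 × 2` stochastic matrices with second eigenvalue `l`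
are exactly the `scalarAddRow l p q` with `p + q = 1 - l`. -/
def scalarAddRow {R : Type*} [CommRing R] (α p q : R) : Matrix (Fin 2) (Fin 2) R :=
  !![α + p, q; p, α + q]

section Algebra

variable {R : Type*} [CommRing R]

theorem scalarAddRow_mul (α p q β r s : R) :
    scalarAddRow α p q * scalarAddRow β r s =
      scalarAddRow (α * β) (α * r + β * p + (p + q) * r) (α * s + β * q + (p + q) * s) := by
  rw [scalarAddRow, scalarAddRow, scalarAddRow, mul_fin_two]
  ext i j
  fin_cases i <;> fin_cases j <;> simp <;> ring

theorem scalarAddRow_submatrix_swap (α p q : R) :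
    (scalarAddRow α p q).submatrix (Equiv.swap 0 1) (Equiv.swap 0 1) = scalarAddRow α q p := by
  ext i j
  fin_cases i <;> fin_cases j <;> simp [scalarAddRow]

theorem scalarAddRow_one_zero_zero : scalarAddRow (1 : R) 0 0 = 1 := by
  rw [scalarAddRow, one_fin_two]
  simp

theorem sum_scalarAddRow_apply_right (α p q : R) (i : Fin 2) :
    ∑ j, scalarAddRow α p q i j = α + p + q := by
  fin_cases i <;> simp [scalarAddRow, add_assoc, add_left_comm]

theorem sum_scalarAddRow_apply_left (α p : R) (j : Fin 2) :
    ∑ i, scalarAddRow α p p i j = α + p + p := by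
  fin_cases j <;> simp [scalarAddRow, add_comm, add_left_comm]

theorem scalarAddRow_apply_mem {σ : Type*} [SetLike σ R] [AddMemClass σ R] {S : σ} {α p q : R}
    (hα : α ∈ S) (hp : p ∈ S) (hq : q ∈ S) (i j : Fin 2) : scalarAddRow α p q i j ∈ S := by
  fin_cases i <;> fin_cases j <;> simp [scalarAddRow, add_mem, *]

theorem scalarAddRow_apply_nonneg [LE R] {α p q : R} (hp : 0 ≤ p) (hq : 0 ≤ q)
    (hαp : 0 ≤ α + p) (hαq : 0 ≤ α + q) (i j : Fin 2) : 0 ≤ scalarAddRow α p q i j := by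
  fin_cases i <;> fin_cases j <;> simpa [scalarAddRow]

theorem forall_scalarAddRow_apply_pos_iff [LT R] (α p q : R) :
    (∀ i j, 0 < scalarAddRow α p q i j) ↔ 0 < α + p ∧ 0 < q ∧ 0 < p ∧ 0 < α + q := by
  simp [scalarAddRow, Fin.forall_fin_two, and_assoc]

theorem eq_scalarAddRow_of_sum_eq_one (P : Matrix (Fin 2) (Fin 2) R)
    (hP : ∀ i, ∑ j, P i j = 1) : P = scalarAddRow (P 0 0 - P 1 0) (P 1 0) (P 0 1) := by
  have h₀ := hP 0
  have h₁ := hP 1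
  simp only [Fin.sum_univ_two] at h₀ h₁
  rw [scalarAddRow, eta_fin_two P]
  ext i j
  fin_cases i <;> fin_cases j <;> simp
  linear_combination h₁ - h₀

end Algebra

section SubfieldOfReal

variable (𝕌 : Subfield ℝ)

theorem similarOver_scalarAddRow {l p q p' q' : ℝ} (hl : l ∈ 𝕌) (hp : p ∈ 𝕌) (hp' : p' ∈ 𝕌)
    (hl1 : l ≠ 1) (hpq : p + q = 1 - l) (hpq' : p' + q' = 1 - l) :
    SimilarOver 𝕌 (scalarAddRow l p q) (scalarAddRow l p' q') := by
  set e := (p - p') / (1 - l)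
  have he : (1 - l) * e = p - p' := mul_div_cancel₀ _ (sub_ne_zero.2 hl1.symm)
  have heU : e ∈ 𝕌 := by aesop
  clear_value e
  have hMN : scalarAddRow 1 e (-e) * scalarAddRow 1 (-e) e = 1 := by
    rw [scalarAddRow_mul, ← scalarAddRow_one_zero_zero]
    congr 1 <;> ring
  have hNM : scalarAddRow 1 (-e) e * scalarAddRow 1 e (-e) = 1 := by
    rw [scalarAddRow_mul, ← scalarAddRow_one_zero_zero]
    congr 1 <;> ring
  have hinv : (scalarAddRow 1 e (-e))⁻¹ = scalarAddRow 1 (-e) e := inv_eq_right_inv hMN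
  have hcomm : scalarAddRow l p' q' * scalarAddRow 1 e (-e) =
      scalarAddRow 1 e (-e) * scalarAddRow l p q := by
    rw [scalarAddRow_mul, scalarAddRow_mul]
    congr 1
    · ring
    · linear_combination he + e * hpq'
    · linear_combination -he - e * hpq' + hpq' - hpq
  refine ⟨scalarAddRow 1 e (-e), ⟨⟨_, _, hMN, hNM⟩, rfl⟩,
    scalarAddRow_apply_mem (Subfield.one_mem 𝕌) heU (neg_mem heU), ?_, ?_⟩
  · rw [hinv]
    exact scalarAddRow_apply_mem (Subfield.one_mem 𝕌) (neg_mem heU) heU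
  · rw [← hcomm, mul_assoc, hinv, hMN, mul_one]

/-- The factors are `U = scalarAddRow α ((p' - α p) / (1 - l)) ((q' - α q) / (1 - l))` and `V`,
the same with `α, p, q` and `β, p', q'` exchanged; `h₁`–`h₈` say that `(1 - l) • U` and
`(1 - l) • V` are nonnegative. -/
theorem esseN_scalarAddRow {l α β p q p' q' : ℝ} (hα : α ∈ 𝕌) (hβ : β ∈ 𝕌) (hp : p ∈ 𝕌)
    (hq : q ∈ 𝕌) (hp' : p' ∈ 𝕌) (hq' : q' ∈ 𝕌) (hαβ : α * β = l) (hl : l < 1)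
    (hpq : p + q = 1 - l) (hpq' : p' + q' = 1 - l)
    (h₁ : α * p ≤ p') (h₂ : α * q ≤ q') (h₃ : 0 ≤ p' + α * q) (h₄ : 0 ≤ q' + α * p)
    (h₅ : β * p' ≤ p) (h₆ : β * q' ≤ q) (h₇ : 0 ≤ p + β * q') (h₈ : 0 ≤ q + β * p') :
    ESSEn {x : ℝ | x ∈ 𝕌 ∧ 0 ≤ x} (scalarAddRow l p q) (scalarAddRow l p' q') := by
  have hc : 0 < 1 - l := sub_pos.2 hl
  have hlU : l ∈ 𝕌 := hαβ ▸ mul_mem hα hβ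
  have add_nonneg_of {γ x y x' : ℝ} (hxy : x + y = 1 - l) (h : 0 ≤ x' + γ * y) :
      0 ≤ γ + (x' - γ * x) / (1 - l) := by
    rw [show γ + (x' - γ * x) / (1 - l) = (x' + γ * y) / (1 - l) by
      field_simp; linear_combination (-γ) * hxy]
    positivity
  refine ⟨scalarAddRow α ((p' - α * p) / (1 - l)) ((q' - α * q) / (1 - l)),
    scalarAddRow β ((p - β * p') / (1 - l)) ((q - β * q') / (1 - l)),
    fun i j => ⟨scalarAddRow_apply_mem hα (by aesop) (by aesop) i j,
      scalarAddRow_apply_nonneg ?_ ?_ ?_ ?_ i j⟩,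
    fun i j => ⟨scalarAddRow_apply_mem hβ (by aesop) (by aesop) i j,
      scalarAddRow_apply_nonneg ?_ ?_ ?_ ?_ i j⟩, ?_, ?_⟩
  · exact div_nonneg (by linarith) hc.le
  · exact div_nonneg (by linarith) hc.le
  · exact add_nonneg_of hpq h₃
  · exact add_nonneg_of (by linarith) h₄
  · exact div_nonneg (by linarith) hc.le
  · exact div_nonneg (by linarith) hc.le
  · exact add_nonneg_of hpq' h₇
  · exact add_nonneg_of (by linarith) h₈
  all_goals
    obtain rfl : q = 1 - l - p := by linarith
    obtain rfl : q' = 1 - l - p' := by linarith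
    subst hαβ
    have hc₁ : 1 - α * β ≠ 0 := hc.ne'
    have hc₂ : 1 - β * α ≠ 0 := by rwa [mul_comm]
    rw [scalarAddRow_mul]
    congr 1 <;> field_simp <;> ring

theorem esseN_scalarAddRow_half_of_abs_le {l p q : ℝ} (hl : l ∈ 𝕌) (hp : p ∈ 𝕌) (hq : q ∈ 𝕌)
    (hpq : p + q = 1 - l) (hlp : |l| ≤ p) (hlq : |l| ≤ q) :
    ESSEn {x : ℝ | x ∈ 𝕌 ∧ 0 ≤ x} (scalarAddRow l p q)
      (scalarAddRow l ((1 - l) / 2) ((1 - l) / 2)) := by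
  obtain ⟨hlp₁, hlp₂⟩ := abs_le.1 hlp
  obtain ⟨hlq₁, hlq₂⟩ := abs_le.1 hlq
  have hm : 0 < (1 - l) / 2 := by linarith [abs_nonneg l]
  have hmU : (1 - l) / 2 ∈ 𝕌 := by aesop
  have hlm : l / ((1 - l) / 2) * ((1 - l) / 2) = l := div_mul_cancel₀ l hm.ne'
  refine esseN_scalarAddRow 𝕌 hmU (div_mem hl hmU) hp hq hmU hmU (mul_div_cancel₀ l hm.ne')
    (by linarith) hpq (by ring) ?_ ?_ ?_ ?_ ?_ ?_ ?_ ?_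
  · exact mul_le_of_le_one_right hm.le (by linarith)
  · exact mul_le_of_le_one_right hm.le (by linarith)
  · exact add_nonneg hm.le (mul_nonneg hm.le (by linarith [abs_nonneg l]))
  · exact add_nonneg hm.le (mul_nonneg hm.le (by linarith [abs_nonneg l]))
  all_goals rw [hlm]; linarith

theorem esseN_scalarAddRow_of_abs_sub_le {l p q p' q' : ℝ} (hl : l ∈ 𝕌) (hp : p ∈ 𝕌)
    (hq : q ∈ 𝕌) (hp' : p' ∈ 𝕌) (hq' : q' ∈ 𝕌) (hl0 : 0 ≤ l) (hp0 : 0 < p) (hq0 : 0 < q)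
    (hp'0 : 0 < p') (hq'0 : 0 < q') (hpq : p + q = 1 - l) (hpq' : p' + q' = 1 - l)
    (hstep : |p' - p| ≤ p * q) :
    ESSEn {x : ℝ | x ∈ 𝕌 ∧ 0 ≤ x} (scalarAddRow l p q) (scalarAddRow l p' q') := by
  wlog hle : p ≤ p' generalizing p q p' q'
  · have hswap := (this hq hp hq' hp' hq0 hp0 hq'0 hp'0 (by linarith) (by linarith)
      (by rw [mul_comm, show q' - q = p - p' by linarith, abs_sub_comm]; exact hstep)
      (by linarith)).submatrix (Equiv.swap 0 1)
    rwa [scalarAddRow_submatrix_swap, scalarAddRow_submatrix_swap] at hswap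
  -- With `α = q' / q`, the only condition that is not automatic is `β p' ≤ p`, i.e. `hcross`.
  have hcross : l * q * p' ≤ p * q' := by
    rw [abs_of_nonneg (sub_nonneg.2 hle)] at hstep
    nlinarith [mul_le_mul_of_nonneg_left hstep (by linarith : 0 ≤ p + q),
      mul_nonneg (sub_nonneg.2 hle) (mul_nonneg hq0.le (by linarith : 0 ≤ 1 - l))]
  refine esseN_scalarAddRow 𝕌 (α := q' / q) (β := l * q / q') (div_mem hq' hq)
    (div_mem (mul_mem hl hq) hq') hp hq hp' hq' (by field_simp) (by linarith) hpq hpq'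
    ?_ ?_ (by positivity) (by positivity) ?_ ?_ (by positivity) (by positivity)
  · rw [div_mul_eq_mul_div, div_le_iff₀ hq0]
    nlinarith
  · rw [div_mul_cancel₀ _ hq0.ne']
  · rw [div_mul_eq_mul_div, div_le_iff₀ hq'0]
    linarith
  · rw [div_mul_cancel₀ _ hq'0.ne']
    nlinarith

/-- Walking `d` linearly to `0` in `N` equal steps, each step is admissible for
`esseN_scalarAddRow_of_abs_sub_le` because `p q = m ^ 2 - d ^ 2` (with `p, q = m ± d`,
`m = (1 - l) / 2`) only grows along the way. -/
theorem sseN_scalarAddRow_half_of_abs_le_mul {l : ℝ} (hl : l ∈ 𝕌) (hl0 : 0 ≤ l) (N : ℕ) {d : ℝ}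
    (hd : d ∈ 𝕌) (hdm : |d| < (1 - l) / 2) (hN : |d| ≤ N * (((1 - l) / 2) ^ 2 - d ^ 2)) :
    SSEn {x : ℝ | x ∈ 𝕌 ∧ 0 ≤ x} (scalarAddRow l ((1 - l) / 2 + d) ((1 - l) / 2 - d))
      (scalarAddRow l ((1 - l) / 2) ((1 - l) / 2)) := by
  set m := (1 - l) / 2
  have hmU : m ∈ 𝕌 := by aesop
  induction N generalizing d with
  | zero =>
    obtain rfl : d = 0 := by simpa using hN
    rw [add_zero, sub_zero]
    exact .refl
  | succ N ih =>
    have hN1 : (0 : ℝ) < N + 1 := by positivity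
    set d' := N / (N + 1) * d with hd'_def
    have hd'U : d' ∈ 𝕌 := by aesop
    have hjump : |d' - d| = |d| / (N + 1) := by
      rw [show d' - d = -(d / (N + 1)) by rw [hd'_def]; field_simp; ring, abs_neg, abs_div,
        abs_of_pos hN1]
    have hd' : |d'| = N / (N + 1) * |d| := by
      rw [abs_mul, abs_of_nonneg (by positivity)]
    have hshrink : |d'| ≤ |d| := by
      rw [hd']
      exact mul_le_of_le_one_left (abs_nonneg d) ((div_le_one hN1).2 (by linarith))
    have hsq : d' ^ 2 ≤ d ^ 2 := sq_le_sq.2 hshrink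
    push_cast at hN
    obtain ⟨hdm₁, hdm₂⟩ := abs_lt.1 hdm
    obtain ⟨hdm₁', hdm₂'⟩ := abs_lt.1 (hshrink.trans_lt hdm)
    have hstep := esseN_scalarAddRow_of_abs_sub_le 𝕌 hl (add_mem hmU hd) (sub_mem hmU hd)
      (add_mem hmU hd'U) (sub_mem hmU hd'U) hl0 (by linarith) (by linarith) (by linarith)
      (by linarith) (by ring) (by ring) (by
        rw [add_sub_add_left_eq_sub, hjump, div_le_iff₀ hN1]
        nlinarith)
    refine .head hstep (ih hd'U (hshrink.trans_lt hdm) ?_)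
    calc |d'| = N / (N + 1) * |d| := hd'
      _ ≤ N / (N + 1) * ((N + 1) * (m ^ 2 - d ^ 2)) := by gcongr
      _ = N * (m ^ 2 - d ^ 2) := by field_simp
      _ ≤ N * (m ^ 2 - d' ^ 2) := by gcongr

theorem sseN_scalarAddRow_half_of_pos {l p q : ℝ} (hl : l ∈ 𝕌) (hp : p ∈ 𝕌) (hq : q ∈ 𝕌)
    (hpq : p + q = 1 - l) (hpos : ∀ i j, 0 < scalarAddRow l p q i j) :
    SSEn {x : ℝ | x ∈ 𝕌 ∧ 0 ≤ x} (scalarAddRow l p q)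
      (scalarAddRow l ((1 - l) / 2) ((1 - l) / 2)) := by
  obtain ⟨hlp, hq0, hp0, hlq⟩ := (forall_scalarAddRow_apply_pos_iff l p q).1 hpos
  rcases le_or_gt l 0 with hl0 | hl0
  · refine .single (esseN_scalarAddRow_half_of_abs_le 𝕌 hl hp hq hpq ?_ ?_) <;>
      rw [abs_of_nonpos hl0] <;> linarith
  · obtain ⟨d, rfl⟩ : ∃ d, p = (1 - l) / 2 + d := ⟨p - (1 - l) / 2, by ring⟩
    obtain rfl : q = (1 - l) / 2 - d := by linarith
    have hd : d ∈ 𝕌 := by simpa using sub_mem hp (show (1 - l) / 2 ∈ 𝕌 by aesop)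
    obtain ⟨N, hN⟩ := exists_nat_ge (|d| / (((1 - l) / 2 + d) * ((1 - l) / 2 - d)))
    refine sseN_scalarAddRow_half_of_abs_le_mul 𝕌 hl hl0.le N hd
      (abs_lt.2 ⟨by linarith, by linarith⟩) ?_
    rw [div_le_iff₀ (by positivity)] at hN
    linarith

end SubfieldOfReal

/-- Let `𝕌` be a subfield of `ℝ`. Every `2 × 2` positive stochastic matrix
over `𝕌` is similar over `𝕌` to a positive doubly stochastic matrix `Q` and strong shift
equivalent over `𝕌₊` to `Q` through `2 × 2` matrices. -/
theorem stmt3 (𝕌 : Subfield ℝ) (P : Matrix (Fin 2) (Fin 2) ℝ)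
    (hUP : ∀ i j, P i j ∈ 𝕌)
    (hpos : ∀ i j, 0 < P i j) (hrow : ∀ i, ∑ j, P i j = 1) :
    ∃ Q : Matrix (Fin 2) (Fin 2) ℝ,
      (∀ i j, Q i j ∈ 𝕌) ∧ (∀ i j, 0 < Q i j) ∧
      (∀ i, ∑ j, Q i j = 1) ∧ (∀ j, ∑ i, Q i j = 1) ∧
      SimilarOver (𝕌 : Set ℝ) P Q ∧
      SSEn {x : ℝ | x ∈ 𝕌 ∧ 0 ≤ x} P Q := by
  obtain ⟨l, p, q, hl, hp, hq, hpq, rfl⟩ : ∃ l p q, l ∈ 𝕌 ∧ p ∈ 𝕌 ∧ q ∈ 𝕌 ∧ p + q = 1 - l ∧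
      P = scalarAddRow l p q :=
    ⟨_, _, _, sub_mem (hUP 0 0) (hUP 1 0), hUP 1 0, hUP 0 1,
      by linarith [Fin.sum_univ_two (P 0) ▸ hrow 0], eq_scalarAddRow_of_sum_eq_one P hrow⟩
  obtain ⟨hlp, hq0, hp0, hlq⟩ := (forall_scalarAddRow_apply_pos_iff l p q).1 hpos
  have hm : (1 - l) / 2 ∈ 𝕌 := by aesop
  refine ⟨scalarAddRow l ((1 - l) / 2) ((1 - l) / 2), scalarAddRow_apply_mem hl hm hm,
    (forall_scalarAddRow_apply_pos_iff _ _ _).2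
      ⟨by linarith, by linarith, by linarith, by linarith⟩,
    fun i => by rw [sum_scalarAddRow_apply_right]; ring,
    fun j => by rw [sum_scalarAddRow_apply_left]; ring,
    similarOver_scalarAddRow 𝕌 hl hp hm (by linarith) hpq (by ring),
    sseN_scalarAddRow_half_of_pos 𝕌 hl hp hq hpq hpos⟩
end

section
/- Every n×n positive stochastic real matrix of rank one is similar over ℝ to the matrix J_n and is strong shift equivalent over ℝ₊ to J_n through a chain consisting entirely of n×n matrices. In particular, every positive stochastic matrix of rank one is similar and strong shift equivalent over ℝ₊ to a positive doubly stochastic matrix of the same size. -/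
open Matrix BigOperators

/-!
A stochastic matrix `P` of rank one has all its rows equal: its range is a line containing the
all-ones vector, so every column of `P` is constant. Hence `J P = P` and `P J = J` for `J = Jₙ`.
These two identities give at once the elementary strong shift equivalence `P = J · P`,
`J = P · J` over `ℝ₊`, and the similarity: `J` and `P` are idempotents with `(P - J)² = 0`,
so `1 + (P - J)` is invertible and intertwines them.
-/

theorem exists_isUnit_mul_eq_mul_of_mul_eq {R : Type*} [Ring R] {a b : R}
    (hab : a * b = b) (hba : b * a = a) : ∃ u : R, IsUnit u ∧ a * u = u * b := by
  have haa : a * a = a := by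
    calc a * a = a * (b * a) := by rw [hba]
      _ = a := by rw [← mul_assoc, hab, hba]
  have hbb : b * b = b := by
    calc b * b = b * (a * b) := by rw [hab]
      _ = b := by rw [← mul_assoc, hba, hab]
  have hsq : (b - a) * (b - a) = 0 := by
    simp only [sub_mul, mul_sub, hab, hba, haa, hbb, sub_self]
  refine ⟨1 + (b - a), IsNilpotent.isUnit_one_add ⟨2, by rw [sq, hsq]⟩, ?_⟩
  simp only [mul_add, add_mul, mul_one, one_mul, mul_sub, sub_mul, hab, haa, hbb]
  abel

theorem Matrix.row_eq_of_rank_le_one_of_mulVec_one {K m n : Type*} [Field K] [Fintype m]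
    [Fintype n] [DecidableEq n] {A : Matrix m n K} (hA : A.rank ≤ 1) (h1 : A *ᵥ 1 = 1)
    (i i' : m) : A i = A i' := by
  have hne : (1 : m → K) ≠ 0 := fun h => one_ne_zero (congrFun h i)
  have hrange : K ∙ (1 : m → K) = LinearMap.range A.mulVecLin :=
    Submodule.eq_of_le_of_finrank_le
      ((Submodule.span_singleton_le_iff_mem _ _).mpr ⟨1, h1⟩)
      (by rw [finrank_span_singleton hne]; exact hA)
  ext j
  have hcol : A *ᵥ Pi.single j 1 ∈ K ∙ (1 : m → K) := hrange ▸ ⟨Pi.single j 1, rfl⟩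
  obtain ⟨c, hc⟩ := Submodule.mem_span_singleton.mp hcol
  have hentry (k : m) : A k j = c := by
    simpa [mulVec_single_one] using (congrFun hc k).symm
  rw [hentry i, hentry i']

section Jconst

variable {n : ℕ}

theorem Jconst_pos (i j : Fin n) : 0 < Jconst n i j := by
  have : (0 : ℝ) < n := by exact_mod_cast i.pos
  simpa [Jconst] using this

theorem Jconst_sum_row (i : Fin n) : ∑ j, Jconst n i j = 1 := by
  have : (n : ℝ) ≠ 0 := by exact_mod_cast i.pos.ne'
  simp [Jconst, this]

theorem Jconst_sum_col (j : Fin n) : ∑ i, Jconst n i j = 1 := by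
  have : (n : ℝ) ≠ 0 := by exact_mod_cast j.pos.ne'
  simp [Jconst, this]

theorem mul_Jconst {P : Matrix (Fin n) (Fin n) ℝ} (hrow : ∀ i, ∑ j, P i j = 1) :
    P * Jconst n = Jconst n := by
  ext i k
  simp only [mul_apply, Jconst, of_apply, ← Finset.sum_mul, hrow i, one_mul]

theorem Jconst_mul {P : Matrix (Fin n) (Fin n) ℝ} (hrows : ∀ i i', P i = P i') :
    Jconst n * P = P := by
  ext i k
  simp only [mul_apply, Jconst, of_apply, hrows _ i, ← Finset.mul_sum, Finset.sum_const,
    Finset.card_univ, Fintype.card_fin, nsmul_eq_mul]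
  have : (n : ℝ) ≠ 0 := by exact_mod_cast i.pos.ne'
  field_simp

end Jconst

/-- Every `n × n` positive stochastic real matrix of rank one is similar over
`ℝ` to `Jₙ` and strong shift equivalent over `ℝ₊` to `Jₙ` through `n × n` matrices; in
particular `Jₙ` is a positive doubly stochastic matrix of the same size. -/
theorem stmt4 {n : ℕ} (P : Matrix (Fin n) (Fin n) ℝ)
    (hpos : ∀ i j, 0 < P i j) (hrow : ∀ i, ∑ j, P i j = 1)
    (hrank : P.rank = 1) :
    (∀ i j, 0 < Jconst n i j) ∧
    (∀ i, ∑ j, Jconst n i j = 1) ∧ (∀ j, ∑ i, Jconst n i j = 1) ∧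
    (∃ M : Matrix (Fin n) (Fin n) ℝ, IsUnit M ∧ Jconst n = M * P * M⁻¹) ∧
    SSEn {x : ℝ | 0 ≤ x} P (Jconst n) := by
  have hones : P *ᵥ 1 = 1 := funext fun i => by simp [mulVec, dotProduct, hrow i]
  have hJP : Jconst n * P = P :=
    Jconst_mul (row_eq_of_rank_le_one_of_mulVec_one hrank.le hones)
  have hPJ : P * Jconst n = Jconst n := mul_Jconst hrow
  obtain ⟨M, hM, hJM⟩ := exists_isUnit_mul_eq_mul_of_mul_eq hJP hPJ
  refine ⟨Jconst_pos, Jconst_sum_row, Jconst_sum_col, ⟨M, hM, ?_⟩, .single ?_⟩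
  · rw [← hJM, mul_nonsing_inv_cancel_right _ _ ((isUnit_iff_isUnit_det M).mp hM)]
  · exact ⟨Jconst n, P, fun i j => (Jconst_pos i j).le, fun i j => (hpos i j).le,
      hJP.symm, hPJ.symm⟩
end

section
/- Let 𝕌 be a subfield of ℝ and let P = (p_ij) be an n×n positive stochastic matrix with entries in 𝕌 and left Perron eigenvector l = (l_1, …, l_n). If for all i, j ∈ {1, …, n} one has Σ_{k=1}^n (l_i/l_k) p_ik < 1 + n (l_i/l_j) p_ij, then P is similar over 𝕌 to a positive doubly stochastic matrix Q and is strong shift equivalent over 𝕌₊ to Q through a chain consisting entirely of n×n matrices. -/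
open Matrix BigOperators

/-!
Let `D = diag l` and let `e` be the all-ones vector. `A = D P D⁻¹` is column stochastic with
`A l = l`, and its row sums are `1 + cᵢ` with `∑ cᵢ = 0`, so `Q = A - n⁻¹ c eᵀ` is doubly
stochastic; the hypothesis says exactly that `Q` is positive.

For column stochastic `X` and `V = I + t p eᵀ` one has `V X V⁻¹ = X - t' (X p - p) eᵀ` with
`t' = t / (1 + t ∑ pᵢ)`. Take `p = e - l`: then `A p - p = c`, and on the segment from `A` to `Q`
the vector `X p - p` remains a positive multiple of `c`, so these conjugations move `X` along the
segment. A single one (`t = 1`) carries `A` to `Q`, which gives the similarity. For the strong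
shift equivalence the segment is cut into `K` equal steps. As `V ≥ 0`, each step is an elementary
equivalence `X = (X V⁻¹) V`, `V X V⁻¹ = V (X V⁻¹)`, and `X V⁻¹` is the next point of the segment
minus a multiple of `p eᵀ` of order `1 / K`, hence nonnegative for `K` large since the segment
consists of positive matrices.
-/

section RankOne

variable {K R : Type*} [CommRing K] [Ring R] [Algebra K R]

theorem one_add_smul_mul_one_add_smul {E : R} {σ : K} (hE : E * E = σ • E) (α β : K) :
    (1 + α • E) * (1 + β • E) = 1 + (α + β + α * β * σ) • E := by
  simp only [mul_add, add_mul, one_mul, mul_one, smul_mul_smul_comm, hE, smul_smul, add_smul]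
  abel

theorem one_add_smul_mul_mul_one_add_smul {E X : R} {σ α β : K} (hE : E * E = σ • E)
    (hEX : E * X = E) (h : α + β + α * β * σ = 0) :
    (1 + α • E) * X * (1 + β • E) = X + β • (X * E - E) := by
  simp only [mul_add, add_mul, one_mul, mul_one, smul_mul_assoc, hEX, mul_smul_comm, hE]
  linear_combination (norm := module) h • E

end RankOne

section VecMulVec

variable {K ι : Type*} [Fintype ι]

theorem vecMulVec_one_mul_self [CommRing K] (p : ι → K) :
    vecMulVec p (1 : ι → K) * vecMulVec p (1 : ι → K) = (∑ i, p i) • vecMulVec p (1 : ι → K) := by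
  rw [vecMulVec_mul_vecMulVec, one_dotProduct, vecMulVec_smul]

theorem vecMulVec_one_mul_of_one_vecMul [CommRing K] {X : Matrix ι ι K} (hX : 1 ᵥ* X = 1)
    (p : ι → K) : vecMulVec p (1 : ι → K) * X = vecMulVec p 1 := by
  rw [vecMulVec_mul, hX]

theorem sum_eq_zero_of_mulVec_eq_add_smul [Field K] {A : Matrix ι ι K} {p d : ι → K} {κ : K}
    (hA : 1 ᵥ* A = 1) (hAp : A *ᵥ p = p + κ • d) (hκ : κ ≠ 0) : ∑ i, d i = 0 := by
  have h := congrArg (1 ⬝ᵥ ·) hAp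
  simp only [dotProduct_mulVec, hA, dotProduct_add, dotProduct_smul, one_dotProduct,
    smul_eq_mul, left_eq_add, mul_eq_zero] at h
  exact h.resolve_left hκ

end VecMulVec

theorem exists_pos_nat_forall_le_mul {ι : Type*} [Finite ι] (f : ι → ℝ) {g : ι → ℝ}
    (hg : ∀ i, 0 < g i) : ∃ K : ℕ, 0 < K ∧ ∀ i, f i ≤ K * g i :=
  ((Filter.eventually_gt_atTop 0).and (Filter.eventually_all.2 fun i =>
    (tendsto_natCast_atTop_atTop.atTop_mul_const (hg i)).eventually_ge_atTop (f i))).exists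

theorem min_le_sub_mul {R : Type*} [CommRing R] [LinearOrder R] [IsStrictOrderedRing R]
    {x y t : R} (ht₀ : 0 ≤ t) (ht₁ : t ≤ 1) : min x (x - y) ≤ x - t * y := by
  rcases le_total 0 y with hy | hy
  · exact (min_le_right _ _).trans (by nlinarith)
  · exact (min_le_left _ _).trans (by nlinarith)

theorem Matrix.inv_apply_mem_subfield {K ι : Type*} [Field K] [Fintype ι] [DecidableEq ι]
    (F : Subfield K) {M : Matrix ι ι K} (hM : ∀ i j, M i j ∈ F) (i j : ι) : M⁻¹ i j ∈ F := by
  obtain ⟨M', rfl⟩ : ∃ M' : Matrix ι ι F, M'.map F.subtype = M :=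
    ⟨of fun i j => ⟨M i j, hM i j⟩, rfl⟩
  rw [inv_def, smul_apply, smul_eq_mul, Ring.inverse_eq_inv', ← RingHom.mapMatrix_apply,
    ← RingHom.map_det, ← RingHom.map_adjugate]
  exact mul_mem (inv_mem (SetLike.coe_mem _)) (SetLike.coe_mem _)

theorem Matrix.mul_apply_mem {R l m o S : Type*} [Semiring R] [Fintype m] [SetLike S R]
    [SubsemiringClass S R] (s : S) {M : Matrix l m R} {N : Matrix m o R} (hM : ∀ i j, M i j ∈ s)
    (hN : ∀ i j, N i j ∈ s) (i : l) (j : o) : (M * N) i j ∈ s :=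
  sum_mem fun k _ => mul_mem (hM i k) (hN k j)

section PerronVector

theorem eq_of_mulVec_eq_self {R ι : Type*} [CommRing R] [LinearOrder R] [IsStrictOrderedRing R]
    [Fintype ι] {P : Matrix ι ι R} (hP : ∀ i j, 0 < P i j) (hrow : P *ᵥ 1 = 1) {x : ι → R}
    (hx : P *ᵥ x = x) (i j : ι) : x i = x j := by
  have : Nonempty ι := ⟨i⟩
  obtain ⟨m, hm⟩ := Finite.exists_max x
  have hzero : ∑ k, P m k * (x m - x k) = 0 := by
    have h1 := congrFun hrow m
    have h2 := congrFun hx m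
    simp only [mulVec, dotProduct, Pi.one_apply, mul_one] at h1 h2
    simp only [mul_sub, Finset.sum_sub_distrib, ← Finset.sum_mul, h1, h2, one_mul, sub_self]
  have hconst : ∀ k, x k = x m := fun k => by
    have h := (Finset.sum_eq_zero_iff_of_nonneg fun k _ =>
      mul_nonneg (hP m k).le (sub_nonneg.2 (hm k))).1 hzero k (Finset.mem_univ k)
    linarith [(mul_eq_zero.1 h).resolve_left (hP m k).ne']
  rw [hconst i, hconst j]

theorem det_sub_one_add_vecMulVec_ne_zero {R ι : Type*} [Field R] [LinearOrder R]
    [IsStrictOrderedRing R] [Fintype ι] [DecidableEq ι] {P : Matrix ι ι R}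
    (hP : ∀ i j, 0 < P i j) (hrow : P *ᵥ 1 = 1) {l : ι → R} (hlP : l ᵥ* P = l)
    (hl : ∑ i, l i = 1) : (P - 1 + vecMulVec 1 1).det ≠ 0 := by
  intro h
  obtain ⟨x, hx0, hCx⟩ := exists_mulVec_eq_zero_iff.2 h
  have hsum : ∑ i, x i = 0 := by
    simpa only [add_mulVec, sub_mulVec, one_mulVec, dotProduct_add, dotProduct_sub,
      dotProduct_mulVec, hlP, sub_self, zero_add, vecMulVec_mulVec, op_smul_eq_smul,
      dotProduct_smul, dotProduct_one, hl, smul_eq_mul, mul_one, one_dotProduct,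
      dotProduct_zero] using congrArg (l ⬝ᵥ ·) hCx
  have hPx : P *ᵥ x = x := by
    simpa only [add_mulVec, sub_mulVec, one_mulVec, vecMulVec_mulVec, one_dotProduct, hsum,
      op_smul_eq_smul, zero_smul, add_zero, sub_eq_zero] using hCx
  apply hx0
  ext j
  have : Nonempty ι := ⟨j⟩
  have hcard : (Fintype.card ι : R) * x j = 0 := by
    rw [← hsum]
    simp [eq_of_mulVec_eq_self hP hrow hPx _ j]
  exact (mul_eq_zero.1 hcard).resolve_left (Nat.cast_ne_zero.2 Fintype.card_ne_zero)

/-- `l` is the unique solution of the linear system `l (P - I + e eᵀ) = eᵀ`, whose matrix has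
entries in `𝕌`. -/
theorem mem_subfield_of_vecMul_eq_self {R ι : Type*} [Field R] [LinearOrder R]
    [IsStrictOrderedRing R] [Fintype ι] [DecidableEq ι] (𝕌 : Subfield R) {P : Matrix ι ι R}
    (hP𝕌 : ∀ i j, P i j ∈ 𝕌) (hP : ∀ i j, 0 < P i j) (hrow : P *ᵥ 1 = 1) {l : ι → R}
    (hlP : l ᵥ* P = l) (hl : ∑ i, l i = 1) (i : ι) : l i ∈ 𝕌 := by
  set C := P - 1 + vecMulVec 1 1
  have hlC : l ᵥ* C = 1 := by
    simp only [C, vecMul_add, vecMul_sub, hlP, vecMul_one, sub_self, zero_add, vecMul_vecMulVec,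
      dotProduct_one, hl, one_smul]
  have hC := det_sub_one_add_vecMulVec_ne_zero hP hrow hlP hl
  have hl_eq : l = 1 ᵥ* C⁻¹ := by
    rw [← hlC, vecMul_vecMul, mul_nonsing_inv _ (isUnit_iff_ne_zero.2 hC), vecMul_one]
  rw [hl_eq]
  exact sum_mem fun j _ => mul_mem (one_mem 𝕌) (inv_apply_mem_subfield 𝕌 (fun j k => by
    simp only [C, Matrix.add_apply, Matrix.sub_apply, one_apply, vecMulVec_apply, Pi.one_apply]
    exact add_mem (sub_mem (hP𝕌 j k) (by split_ifs <;> simp)) (by simp)) j i)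

end PerronVector

section ShiftEquivalence

variable (𝕌 : Subfield ℝ) {n : ℕ}

theorem similarOver_of_mul_eq_one {U : Set ℝ} {A M N : Matrix (Fin n) (Fin n) ℝ}
    (hMN : M * N = 1) (hM : ∀ i j, M i j ∈ U) (hN : ∀ i j, N i j ∈ U) :
    SimilarOver U A (M * A * N) :=
  ⟨M, (isUnit_iff_isUnit_det M).2 (isUnit_det_of_right_inverse hMN), hM,
    by rwa [inv_eq_right_inv hMN], by rw [inv_eq_right_inv hMN]⟩

variable {𝕌} in
theorem SimilarOver.trans {A B C : Matrix (Fin n) (Fin n) ℝ} (hAB : SimilarOver 𝕌 A B)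
    (hBC : SimilarOver 𝕌 B C) : SimilarOver 𝕌 A C := by
  obtain ⟨M, hM, hM𝕌, hM'𝕌, rfl⟩ := hAB
  obtain ⟨N, hN, hN𝕌, hN'𝕌, rfl⟩ := hBC
  refine ⟨N * M, hN.mul hM, mul_apply_mem 𝕌 hN𝕌 hM𝕌, ?_, ?_⟩
  · rw [Matrix.mul_inv_rev]
    exact mul_apply_mem 𝕌 hM'𝕌 hN'𝕌
  · simp only [Matrix.mul_inv_rev, Matrix.mul_assoc]

theorem one_add_smul_vecMulVec_apply_mem {p : Fin n → ℝ} {c : ℝ} (hp𝕌 : ∀ i, p i ∈ 𝕌)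
    (hc : c ∈ 𝕌) (i j : Fin n) : (1 + c • vecMulVec p 1) i j ∈ 𝕌 := by
  simp only [Matrix.add_apply, one_apply, Matrix.smul_apply, vecMulVec_apply, Pi.one_apply,
    smul_eq_mul, mul_one]
  exact add_mem (by split_ifs <;> simp) (mul_mem hc (hp𝕌 i))

theorem similarOver_diagonal_mul_mul_diagonal_inv {l : Fin n → ℝ} (hl𝕌 : ∀ i, l i ∈ 𝕌)
    (hl : ∀ i, l i ≠ 0) (P : Matrix (Fin n) (Fin n) ℝ) :
    SimilarOver 𝕌 P (diagonal l * P * diagonal l⁻¹) := by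
  refine similarOver_of_mul_eq_one ?_ (fun i j => ?_) (fun i j => ?_)
  · rw [diagonal_mul_diagonal,
      show (fun i => l i * l⁻¹ i) = fun _ => 1 from funext fun i => mul_inv_cancel₀ (hl i),
      diagonal_one]
  · rw [diagonal_apply]; split_ifs <;> simp [hl𝕌]
  · rw [diagonal_apply]; split_ifs <;> simp [hl𝕌]

theorem essen_diagonal_mul_mul_diagonal_inv {l : Fin n → ℝ} (hl𝕌 : ∀ i, l i ∈ 𝕌)
    (hl : ∀ i, 0 < l i) {P : Matrix (Fin n) (Fin n) ℝ} (hP𝕌 : ∀ i j, P i j ∈ 𝕌)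
    (hP : ∀ i j, 0 ≤ P i j) :
    ESSEn {x | x ∈ 𝕌 ∧ 0 ≤ x} P (diagonal l * P * diagonal l⁻¹) := by
  refine ⟨diagonal l⁻¹, diagonal l * P, fun i j => ?_, fun i j => ?_, ?_, rfl⟩
  · rw [diagonal_apply]
    split_ifs
    · exact ⟨inv_mem (hl𝕌 i), (inv_pos.2 (hl i)).le⟩
    · exact ⟨zero_mem 𝕌, le_rfl⟩
  · rw [diagonal_mul]
    exact ⟨mul_mem (hl𝕌 i) (hP𝕌 i j), mul_nonneg (hl i).le (hP i j)⟩
  · rw [← Matrix.mul_assoc, diagonal_mul_diagonal,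
      show (fun i => l⁻¹ i * l i) = fun _ => 1 from funext fun i => inv_mul_cancel₀ (hl i).ne',
      diagonal_one, Matrix.one_mul]

theorem similarOver_sub_vecMulVec {A : Matrix (Fin n) (Fin n) ℝ} {d p : Fin n → ℝ} {κ : ℝ}
    (hp𝕌 : ∀ i, p i ∈ 𝕌) (hκ𝕌 : κ ∈ 𝕌) (hA : 1 ᵥ* A = 1) (hAp : A *ᵥ p = p + κ • d)
    (hκ : κ ≠ 0) (hσ : ∑ i, p i ≠ κ) : SimilarOver 𝕌 A (A - vecMulVec d 1) := by
  set σ := ∑ i, p i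
  have hκσ : κ - σ ≠ 0 := sub_ne_zero.2 hσ.symm
  have hcoef : (κ - σ)⁻¹ + -κ⁻¹ + (κ - σ)⁻¹ * -κ⁻¹ * σ = 0 := by field_simp; ring
  have hE := vecMulVec_one_mul_self p
  have hMN := one_add_smul_mul_one_add_smul hE (κ - σ)⁻¹ (-κ⁻¹)
  rw [hcoef, zero_smul, add_zero] at hMN
  have h := similarOver_of_mul_eq_one (A := A) hMN
    (one_add_smul_vecMulVec_apply_mem 𝕌 hp𝕌 (inv_mem (sub_mem hκ𝕌 (sum_mem fun i _ => hp𝕌 i))))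
    (one_add_smul_vecMulVec_apply_mem 𝕌 hp𝕌 (neg_mem (inv_mem hκ𝕌)))
  rwa [one_add_smul_mul_mul_one_add_smul hE (vecMulVec_one_mul_of_one_vecMul hA p) hcoef,
    mul_vecMulVec, ← sub_vecMulVec, hAp, add_sub_cancel_left, smul_vecMulVec, neg_smul,
    smul_smul, inv_mul_cancel₀ hκ, one_smul, ← sub_eq_add_neg] at h

theorem essen_sub_smul_vecMulVec {X : Matrix (Fin n) (Fin n) ℝ} {p : Fin n → ℝ} {a a' : ℝ}
    (hX𝕌 : ∀ i j, X i j ∈ 𝕌) (hp𝕌 : ∀ i, p i ∈ 𝕌) (ha'𝕌 : a' ∈ 𝕌) (hX : 1 ᵥ* X = 1)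
    (hp : 0 ≤ p) (ha' : 0 < a') (ha : a = a' + ∑ i, p i)
    (hU : ∀ i j, 0 ≤ X i j - (X *ᵥ p) i / a) :
    ESSEn {x | x ∈ 𝕌 ∧ 0 ≤ x} X (X - a⁻¹ • vecMulVec (X *ᵥ p - p) 1) := by
  have hσ : 0 ≤ ∑ i, p i := Finset.sum_nonneg fun i _ => hp i
  have ha0 : 0 < a := ha ▸ add_pos_of_pos_of_nonneg ha' hσ
  have ha𝕌 : a ∈ 𝕌 := ha ▸ add_mem ha'𝕌 (sum_mem fun i _ => hp𝕌 i)
  have hcoef : a'⁻¹ + -a⁻¹ + a'⁻¹ * -a⁻¹ * ∑ i, p i = 0 := by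
    rw [ha]; field_simp; ring
  have hE := vecMulVec_one_mul_self p
  refine ⟨X * (1 + (-a⁻¹) • vecMulVec p 1), 1 + a'⁻¹ • vecMulVec p 1, fun i j => ?_,
    fun i j => ⟨one_add_smul_vecMulVec_apply_mem 𝕌 hp𝕌 (inv_mem ha'𝕌) i j, ?_⟩, ?_, ?_⟩
  · have hXp : ∑ k, X i k * p k ∈ 𝕌 := sum_mem fun k _ => mul_mem (hX𝕌 i k) (hp𝕌 k)
    simp only [mul_add, mul_one, mul_smul_comm, mul_vecMulVec, Matrix.add_apply,
      Matrix.smul_apply, vecMulVec_apply, Pi.one_apply, smul_eq_mul]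
    refine ⟨add_mem (hX𝕌 i j) (mul_mem (neg_mem (inv_mem ha𝕌)) hXp), ?_⟩
    linarith [div_eq_inv_mul ((X *ᵥ p) i) a ▸ hU i j]
  · simp only [Matrix.add_apply, one_apply, Matrix.smul_apply, vecMulVec_apply, Pi.one_apply,
      smul_eq_mul, mul_one]
    have := mul_nonneg (inv_nonneg.2 ha'.le) (hp i)
    split_ifs <;> linarith
  · rw [Matrix.mul_assoc, one_add_smul_mul_one_add_smul hE,
      show -a⁻¹ + a'⁻¹ + -a⁻¹ * a'⁻¹ * ∑ i, p i = 0 by linear_combination hcoef, zero_smul,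
      add_zero, Matrix.mul_one]
  · rw [← Matrix.mul_assoc, one_add_smul_mul_mul_one_add_smul hE
      (vecMulVec_one_mul_of_one_vecMul hX p) hcoef, mul_vecMulVec, ← sub_vecMulVec]
    module

theorem essen_sub_smul_vecMulVec_add {A : Matrix (Fin n) (Fin n) ℝ} {d p : Fin n → ℝ}
    {κ t h : ℝ} (hA𝕌 : ∀ i j, A i j ∈ 𝕌) (hd𝕌 : ∀ i, d i ∈ 𝕌) (hp𝕌 : ∀ i, p i ∈ 𝕌)
    (hκ𝕌 : κ ∈ 𝕌) (ht𝕌 : t ∈ 𝕌) (hh𝕌 : h ∈ 𝕌) (hA : 1 ᵥ* A = 1) (hd : ∑ i, d i = 0)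
    (hp : 0 ≤ p) (hAp : A *ᵥ p = p + κ • d) (hh : 0 < h) (hκ : 0 < κ - (t + h) * ∑ i, p i)
    (hU : ∀ i j, h * p i ≤ (κ - t * ∑ i, p i) * (A i j - (t + h) * d i)) :
    ESSEn {x | x ∈ 𝕌 ∧ 0 ≤ x} (A - t • vecMulVec d 1) (A - (t + h) • vecMulVec d 1) := by
  set σ := ∑ i, p i
  have hσ : 0 ≤ σ := Finset.sum_nonneg fun i _ => hp i
  have hκt : 0 < κ - t * σ := by nlinarith
  set X : Matrix (Fin n) (Fin n) ℝ := A - t • vecMulVec d 1 with hXdef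
  have hX : 1 ᵥ* X = 1 := by
    simp only [hXdef, vecMul_sub, vecMul_smul, vecMul_vecMulVec, hA, one_dotProduct, hd, zero_smul,
      smul_zero, sub_zero]
  have hXp : X *ᵥ p = p + (κ - t * σ) • d := by
    simp only [hXdef, sub_mulVec, smul_mulVec, vecMulVec_mulVec, hAp, one_dotProduct,
      op_smul_eq_smul, smul_smul, sub_smul]
    abel
  have hstep := essen_sub_smul_vecMulVec 𝕌 (X := X) (a := (κ - t * σ) / h)
    (a' := (κ - (t + h) * σ) / h)
    (fun i j => sub_mem (hA𝕌 i j) (mul_mem ht𝕌 (mul_mem (hd𝕌 i) (one_mem 𝕌))))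
    hp𝕌 (div_mem (sub_mem hκ𝕌 (mul_mem (add_mem ht𝕌 hh𝕌) (sum_mem fun i _ => hp𝕌 i))) hh𝕌)
    hX hp (div_pos hκ hh) (by field_simp; ring) (fun i j => by
      rw [hXp]
      have key : X i j - (p + (κ - t * σ) • d) i / ((κ - t * σ) / h) =
          A i j - (t + h) * d i - h * p i / (κ - t * σ) := by
        simp only [hXdef, Matrix.sub_apply, Matrix.smul_apply, vecMulVec_apply, Pi.add_apply,
          Pi.smul_apply, Pi.one_apply, smul_eq_mul, mul_one]
        field_simp
        ring
      rw [key, sub_nonneg, div_le_iff₀ hκt]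
      linarith [hU i j])
  convert hstep using 1
  rw [hXp, add_sub_cancel_left, smul_vecMulVec, smul_smul, inv_div,
    div_mul_cancel₀ _ hκt.ne', sub_sub, ← add_smul]

theorem ssen_sub_vecMulVec {A : Matrix (Fin n) (Fin n) ℝ} {d p : Fin n → ℝ} {κ : ℝ}
    (hA𝕌 : ∀ i j, A i j ∈ 𝕌) (hd𝕌 : ∀ i, d i ∈ 𝕌) (hp𝕌 : ∀ i, p i ∈ 𝕌) (hκ𝕌 : κ ∈ 𝕌)
    (hA : 1 ᵥ* A = 1) (hApos : ∀ i j, 0 < A i j) (hQpos : ∀ i j, 0 < A i j - d i)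
    (hp : 0 ≤ p) (hAp : A *ᵥ p = p + κ • d) (hκ : ∑ i, p i < κ) :
    SSEn {x | x ∈ 𝕌 ∧ 0 ≤ x} A (A - vecMulVec d 1) := by
  set σ := ∑ i, p i
  have hσ : 0 ≤ σ := Finset.sum_nonneg fun i _ => hp i
  have hd : ∑ i, d i = 0 := sum_eq_zero_of_mulVec_eq_add_smul hA hAp (by linarith)
  obtain ⟨K, hK, hKp⟩ := exists_pos_nat_forall_le_mul (fun ij : Fin n × Fin n => p ij.1)
    fun ij => mul_pos (sub_pos.2 hκ) (lt_min (hApos ij.1 ij.2) (hQpos ij.1 ij.2))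
  have hKR : (0 : ℝ) < K := Nat.cast_pos.2 hK
  set Y : ℕ → Matrix (Fin n) (Fin n) ℝ := fun k => A - ((k : ℝ) / K) • vecMulVec d 1 with hY
  have step : ∀ k < K, ESSEn {x | x ∈ 𝕌 ∧ 0 ≤ x} (Y k) (Y (k + 1)) := by
    intro k hk
    have hkK : (k : ℝ) / K + 1 / K ≤ 1 := by
      rw [← add_div, div_le_one hKR]
      exact_mod_cast hk
    have hkσ : (k : ℝ) / K * σ ≤ σ :=
      mul_le_of_le_one_left hσ (by linarith [one_div_pos.2 hKR])
    have hsucc : ((k + 1 : ℕ) : ℝ) / K = k / K + 1 / K := by push_cast; ring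
    simp only [hY, hsucc]
    refine essen_sub_smul_vecMulVec_add 𝕌 hA𝕌 hd𝕌 hp𝕌 hκ𝕌
      (div_mem (natCast_mem 𝕌 k) (natCast_mem 𝕌 K)) (div_mem (one_mem 𝕌) (natCast_mem 𝕌 K))
      hA hd hp hAp (by positivity) ?_ fun i j => ?_
    · linarith [mul_le_mul_of_nonneg_right hkK hσ]
    · have hm := lt_min (hApos i j) (hQpos i j)
      calc 1 / K * p i ≤ (κ - σ) * min (A i j) (A i j - d i) := by
            rw [div_mul_eq_mul_div, one_mul, div_le_iff₀ hKR, mul_comm]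
            exact hKp (i, j)
        _ ≤ (κ - k / K * σ) * (A i j - (k / K + 1 / K) * d i) :=
            mul_le_mul (by linarith) (min_le_sub_mul (by positivity) hkK) hm.le (by linarith)
  have hY0 : Y 0 = A := by simp [hY]
  have hYK : Y K = A - vecMulVec d 1 := by simp [hY, hKR.ne']
  rw [← hYK, ← hY0]
  exact Relation.ReflTransGen.lift Y (fun _ _ h => h) 0 K
    (reflTransGen_of_succ_of_le (fun i j => ESSEn {x | x ∈ 𝕌 ∧ 0 ≤ x} (Y i) (Y j))
      (fun k hk => step k hk.2) (Nat.zero_le K))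

end ShiftEquivalence

section Balance

variable {n : ℕ} {P : Matrix (Fin n) (Fin n) ℝ} {l : Fin n → ℝ}

theorem diagonal_mul_mul_diagonal_inv_apply (i j : Fin n) :
    (diagonal l * P * diagonal l⁻¹) i j = l i / l j * P i j := by
  rw [mul_diagonal, diagonal_mul, Pi.inv_apply]
  ring

theorem one_vecMul_diagonal_mul_mul_diagonal_inv (hl : ∀ i, l i ≠ 0) (hlP : l ᵥ* P = l) :
    1 ᵥ* (diagonal l * P * diagonal l⁻¹) = 1 := by
  have h1 : (1 : Fin n → ℝ) ᵥ* diagonal l = l := funext fun i => by simp [vecMul_diagonal]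
  rw [← vecMul_vecMul, ← vecMul_vecMul, h1, hlP]
  exact funext fun j => by simp [vecMul_diagonal, hl]

theorem diagonal_mul_mul_diagonal_inv_mulVec (hl : ∀ i, l i ≠ 0) (hP : P *ᵥ 1 = 1) :
    (diagonal l * P * diagonal l⁻¹) *ᵥ l = l := by
  have h1 : diagonal l⁻¹ *ᵥ l = 1 := funext fun i => by simp [mulVec_diagonal, hl]
  rw [← mulVec_mulVec, h1, ← mulVec_mulVec, hP]
  exact funext fun i => by simp [mulVec_diagonal]

end Balance

theorem exists_doublyStochastic_of_colStochastic (𝕌 : Subfield ℝ) {n : ℕ}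
    {A : Matrix (Fin n) (Fin n) ℝ} {r : Fin n → ℝ} (hA𝕌 : ∀ i j, A i j ∈ 𝕌)
    (hr𝕌 : ∀ i, r i ∈ 𝕌) (hA : 1 ᵥ* A = 1) (hApos : ∀ i j, 0 < A i j) (hAr : A *ᵥ r = r)
    (hr : 0 ≤ r) (hrsum : ∑ i, r i = 1) (hcond : ∀ i j, (A *ᵥ 1) i < 1 + n * A i j) :
    ∃ Q : Matrix (Fin n) (Fin n) ℝ,
      (∀ i j, Q i j ∈ 𝕌) ∧ (∀ i j, 0 < Q i j) ∧
      (∀ i, ∑ j, Q i j = 1) ∧ (∀ j, ∑ i, Q i j = 1) ∧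
      SimilarOver 𝕌 A Q ∧ SSEn {x : ℝ | x ∈ 𝕌 ∧ 0 ≤ x} A Q := by
  have hn : (n : ℝ) ≠ 0 := by
    rintro h
    obtain rfl := Nat.cast_eq_zero.1 h
    simp at hrsum
  set p : Fin n → ℝ := 1 - r
  set d : Fin n → ℝ := (n : ℝ)⁻¹ • (A *ᵥ 1 - 1)
  have hp𝕌 : ∀ i, p i ∈ 𝕌 := fun i => sub_mem (one_mem 𝕌) (hr𝕌 i)
  have hd𝕌 : ∀ i, d i ∈ 𝕌 := fun i => mul_mem (inv_mem (natCast_mem 𝕌 n))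
    (sub_mem (show ∑ j, A i j * 1 ∈ 𝕌 from sum_mem fun j _ => mul_mem (hA𝕌 i j) (one_mem 𝕌))
      (one_mem 𝕌))
  have hp : 0 ≤ p := fun i => sub_nonneg.2 <| by
    rw [Pi.one_apply, ← hrsum]
    exact Finset.single_le_sum (fun j _ => hr j) (Finset.mem_univ i)
  have hσ : ∑ i, p i < n := by
    simp [p, Finset.sum_sub_distrib, hrsum]
  have hAp : A *ᵥ p = p + (n : ℝ) • d := by
    simp only [p, d, mulVec_sub, hAr, smul_smul, mul_inv_cancel₀ hn, one_smul]
    abel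
  have hQpos : ∀ i j, 0 < A i j - d i := fun i j => by
    simp only [d, Pi.smul_apply, Pi.sub_apply, Pi.one_apply, smul_eq_mul]
    rw [sub_pos, inv_mul_lt_iff₀ (by positivity)]
    linarith [hcond i j]
  have hd : ∑ i, d i = 0 := sum_eq_zero_of_mulVec_eq_add_smul hA hAp hn
  refine ⟨A - vecMulVec d 1, fun i j => ?_, fun i j => ?_, fun i => ?_, fun j => ?_,
    similarOver_sub_vecMulVec 𝕌 hp𝕌 (natCast_mem 𝕌 n) hA hAp hn hσ.ne,
    ssen_sub_vecMulVec 𝕌 hA𝕌 hd𝕌 hp𝕌 (natCast_mem 𝕌 n) hA hApos hQpos hp hAp hσ⟩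
  · simpa using sub_mem (hA𝕌 i j) (hd𝕌 i)
  · simpa using hQpos i j
  · simp only [Matrix.sub_apply, vecMulVec_apply, Pi.one_apply, mul_one, Finset.sum_sub_distrib,
      Finset.sum_const, Finset.card_univ, Fintype.card_fin, nsmul_eq_mul, d, Pi.smul_apply,
      Pi.sub_apply, smul_eq_mul, mulVec, dotProduct]
    field_simp
    ring
  · have hcol := congrFun hA j
    simp only [vecMul, dotProduct, Pi.one_apply, one_mul] at hcol
    simp only [Matrix.sub_apply, vecMulVec_apply, Pi.one_apply, mul_one, Finset.sum_sub_distrib,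
      hcol, hd, sub_zero]

/-- Let `𝕌` be a subfield of `ℝ` and `P` an `n × n` positive stochastic
matrix over `𝕌` with left Perron eigenvector `l`. If `∑ₖ (lᵢ/lₖ) p_{ik} < 1 + n (lᵢ/lⱼ) p_{ij}`
for all `i, j`, then `P` is similar over `𝕌` to a positive doubly stochastic matrix `Q` and
strong shift equivalent over `𝕌₊` to `Q` through `n × n` matrices. -/
theorem stmt9 (𝕌 : Subfield ℝ) {n : ℕ}
    (P : Matrix (Fin n) (Fin n) ℝ) (hUP : ∀ i j, P i j ∈ 𝕌)
    (hpos : ∀ i j, 0 < P i j) (hrow : ∀ i, ∑ j, P i j = 1)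
    (l : Fin n → ℝ) (hl : ∀ i, 0 < l i) (hlsum : ∑ i, l i = 1)
    (hperron : ∀ j, ∑ i, l i * P i j = l j)
    (hcond : ∀ i j, ∑ k, (l i / l k) * P i k < 1 + (n : ℝ) * ((l i / l j) * P i j)) :
    ∃ Q : Matrix (Fin n) (Fin n) ℝ,
      (∀ i j, Q i j ∈ 𝕌) ∧ (∀ i j, 0 < Q i j) ∧
      (∀ i, ∑ j, Q i j = 1) ∧ (∀ j, ∑ i, Q i j = 1) ∧
      SimilarOver (𝕌 : Set ℝ) P Q ∧
      SSEn {x : ℝ | x ∈ 𝕌 ∧ 0 ≤ x} P Q := by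
  have hl0 : ∀ i, l i ≠ 0 := fun i => (hl i).ne'
  have hP1 : P *ᵥ 1 = 1 := funext fun i => by simpa [mulVec, dotProduct] using hrow i
  have hlP : l ᵥ* P = l := funext fun j => by simpa [vecMul, dotProduct] using hperron j
  have hl𝕌 := mem_subfield_of_vecMul_eq_self 𝕌 hUP hpos hP1 hlP hlsum
  obtain ⟨Q, hQ𝕌, hQpos, hQrow, hQcol, hAQ, hAQ'⟩ :=
    exists_doublyStochastic_of_colStochastic 𝕌 (A := diagonal l * P * diagonal l⁻¹)
      (fun i j => by
        rw [diagonal_mul_mul_diagonal_inv_apply]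
        exact mul_mem (div_mem (hl𝕌 i) (hl𝕌 j)) (hUP i j))
      hl𝕌 (one_vecMul_diagonal_mul_mul_diagonal_inv hl0 hlP)
      (fun i j => by
        rw [diagonal_mul_mul_diagonal_inv_apply]
        exact mul_pos (div_pos (hl i) (hl j)) (hpos i j))
      (diagonal_mul_mul_diagonal_inv_mulVec hl0 hP1) (fun i => (hl i).le) hlsum
      (fun i j => by
        simpa only [mulVec, dotProduct, diagonal_mul_mul_diagonal_inv_apply, Pi.one_apply,
          mul_one] using hcond i j)
  exact ⟨Q, hQ𝕌, hQpos, hQrow, hQcol,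
    (similarOver_diagonal_mul_mul_diagonal_inv 𝕌 hl𝕌 hl0 P).trans hAQ,
    .head (essen_diagonal_mul_mul_diagonal_inv 𝕌 hl𝕌 hl hUP fun i j => (hpos i j).le) hAQ'⟩
end

section
/- There is no 3×3 doubly stochastic real matrix whose characteristic polynomial equals t(t − 1)(t + 1) = t³ − t. -/
/-!
Comparing coefficients, `t³ - t` forces `trace A = 0`, so the nonnegative diagonal of `A`
vanishes, and then `A₀₁A₁₀ + A₀₂A₂₀ + A₁₂A₂₁ = 1`. But a doubly stochastic `3 × 3` matrix with
zero diagonal is `a P + (1 - a) Pᵀ` for the cyclic shift `P`, and for it that sum is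
`3a(1 - a) ≤ 3/4`.
-/

open Matrix Polynomial

namespace Matrix

lemma charpoly_fin_three {R : Type*} [CommRing R] (M : Matrix (Fin 3) (Fin 3) R) :
    M.charpoly = X ^ 3 - C M.trace * X ^ 2
      + C (M 0 0 * M 1 1 - M 0 1 * M 1 0 + M 0 0 * M 2 2 - M 0 2 * M 2 0
        + M 1 1 * M 2 2 - M 1 2 * M 2 1) * X - C M.det := by
  simp only [charpoly, det_fin_three, trace_fin_three, charmatrix_apply, diagonal_apply,
    Fin.reduceEq, ↓reduceIte, zero_sub, map_add, map_sub, map_mul]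
  ring

lemma diag_eq_zero_of_nonneg_of_trace_eq_zero {n R : Type*} [Fintype n]
    [AddCommMonoid R] [PartialOrder R] [IsOrderedAddMonoid R] {M : Matrix n n R}
    (hM : ∀ i, 0 ≤ M i i) (htr : M.trace = 0) : M.diag = 0 := by
  funext i
  exact (Finset.sum_eq_zero_iff_of_nonneg fun j _ => hM j).1 htr i (Finset.mem_univ i)

lemma swap_products_le_of_mem_doublyStochastic {A : Matrix (Fin 3) (Fin 3) ℝ}
    (hA : A ∈ doublyStochastic ℝ (Fin 3)) (hdiag : A.diag = 0) :
    A 0 1 * A 1 0 + A 0 2 * A 2 0 + A 1 2 * A 2 1 ≤ 3 / 4 := by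
  have h00 : A 0 0 = 0 := congrFun hdiag 0
  have h11 : A 1 1 = 0 := congrFun hdiag 1
  have h22 : A 2 2 = 0 := congrFun hdiag 2
  have row i := sum_row_of_mem_doublyStochastic hA i
  have col j := sum_col_of_mem_doublyStochastic hA j
  simp only [Fin.sum_univ_three] at row col
  have r0 := row 0; have r1 := row 1; have r2 := row 2; have c0 := col 0; have c1 := col 1
  have e02 : A 0 2 = 1 - A 0 1 := by linarith
  have e12 : A 1 2 = A 0 1 := by linarith
  have e10 : A 1 0 = 1 - A 0 1 := by linarith
  have e20 : A 2 0 = A 0 1 := by linarith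
  have e21 : A 2 1 = 1 - A 0 1 := by linarith
  rw [e02, e12, e10, e20, e21]
  nlinarith [sq_nonneg (2 * A 0 1 - 1)]

end Matrix

/-- There is no `3 × 3` doubly stochastic real matrix whose characteristic
polynomial is `t(t-1)(t+1) = t³ - t`. -/
theorem stmt10 :
    ¬ ∃ A : Matrix (Fin 3) (Fin 3) ℝ,
      (∀ i j, 0 ≤ A i j) ∧ (∀ i, ∑ j, A i j = 1) ∧ (∀ j, ∑ i, A i j = 1) ∧
      A.charpoly = X ^ 3 - X := by
  rintro ⟨A, hpos, hrow, hcol, hcp⟩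
  have hA : A ∈ doublyStochastic ℝ (Fin 3) := mem_doublyStochastic_iff_sum.2 ⟨hpos, hrow, hcol⟩
  rw [charpoly_fin_three] at hcp
  have htr : A.trace = 0 := by
    simpa [coeff_X, coeff_C] using congrArg (coeff · 2) hcp
  have he2 : A 0 0 * A 1 1 - A 0 1 * A 1 0 + A 0 0 * A 2 2 - A 0 2 * A 2 0
      + A 1 1 * A 2 2 - A 1 2 * A 2 1 = -1 := by
    simpa [coeff_X, coeff_C] using congrArg (coeff · 1) hcp
  have hdiag := diag_eq_zero_of_nonneg_of_trace_eq_zero (fun i => hpos i i) htr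
  have hle := swap_products_le_of_mem_doublyStochastic hA hdiag
  simp only [← diag_apply A, hdiag, Pi.zero_apply] at he2
  linarith
end

section
/- For n ∈ ℕ let A_n = (1/(n+2)) · [[1, n, 1], [n, 1, 1], [n, 1, 1]]. Then there exists n₀ ∈ ℕ such that no 3×3 doubly stochastic real matrix is similar over ℝ to A_{n₀}. -/
/-!
`A_n` is a stochastic matrix of rank 2, with eigenvalues `1`, `0` and `(1 - n)/(n + 2)`, so
`tr A_n = 3/(n + 2) → 0` while `tr A_n² → 2`. On the other hand every `3 × 3` doubly stochastic
matrix `B` satisfies `tr B² ≤ 3/2 · (1 + tr B)` (with equality for a transposition and for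
`(J - I)/2`). Traces of powers are similarity invariants, so for large `n` (already `n = 19`)
no doubly stochastic matrix is similar to `A_n`.
-/

open Matrix

/-- The matrix `A_n = (1/(n+2)) · [[1, n, 1], [n, 1, 1], [n, 1, 1]]`. -/
noncomputable def Amat (n : ℕ) : Matrix (Fin 3) (Fin 3) ℝ :=
  (1 / ((n : ℝ) + 2)) • !![1, (n : ℝ), 1; (n : ℝ), 1, 1; (n : ℝ), 1, 1]

section

variable {R : Type*} [Field R] [LinearOrder R] [IsStrictOrderedRing R]

/-- The left side is convex and is at most `12` at the vertices `0`, `(1, 1, 1)` and the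
permutations of `(2, 0, 0)` of the polytope cut out by the hypotheses. -/
lemma quadratic_le_of_pairwise_add_le_two {x y z : R} (hx : 0 ≤ x) (hy : 0 ≤ y) (hz : 0 ≤ z)
    (hxy : x + y ≤ 2) (hxz : x + z ≤ 2) (hyz : y + z ≤ 2) :
    3 * (x ^ 2 + y ^ 2 + z ^ 2) + (x + y + z) ^ 2 - 2 * (x + y + z) ≤ 12 := by
  have hxy' := sub_nonneg.2 hxy
  have hxz' := sub_nonneg.2 hxz
  have hyz' := sub_nonneg.2 hyz
  nlinarith [mul_nonneg hx hyz', mul_nonneg hy hxz', mul_nonneg hz hxy',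
    mul_nonneg hxy' hxz', mul_nonneg hxy' hyz', mul_nonneg hyz' hxz']

lemma trace_sq_le_of_mem_doublyStochastic {B : Matrix (Fin 3) (Fin 3) R}
    (hB : B ∈ doublyStochastic R (Fin 3)) : trace (B ^ 2) ≤ 3 / 2 * (1 + trace B) := by
  obtain ⟨hnonneg, hrow, hcol⟩ := mem_doublyStochastic_iff_sum.1 hB
  have h0 := hrow 0; have h1 := hrow 1; have h2 := hrow 2
  have h0' := hcol 0; have h1' := hcol 1; have h2' := hcol 2
  simp only [Fin.sum_univ_three] at h0 h1 h2 h0' h1' h2'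
  -- `x, y, z` are the symmetrised off-diagonal entries; the diagonal is determined by them.
  have key := quadratic_le_of_pairwise_add_le_two (x := B 0 1 + B 1 0) (y := B 0 2 + B 2 0)
    (z := B 1 2 + B 2 1) (add_nonneg (hnonneg 0 1) (hnonneg 1 0))
    (add_nonneg (hnonneg 0 2) (hnonneg 2 0)) (add_nonneg (hnonneg 1 2) (hnonneg 2 1))
    (by linarith [hnonneg 0 0]) (by linarith [hnonneg 1 1]) (by linarith [hnonneg 2 2])
  have hd0 : B 0 0 = 1 - (B 0 1 + B 1 0 + (B 0 2 + B 2 0)) / 2 := by linarith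
  have hd1 : B 1 1 = 1 - (B 0 1 + B 1 0 + (B 1 2 + B 2 1)) / 2 := by linarith
  have hd2 : B 2 2 = 1 - (B 0 2 + B 2 0 + (B 1 2 + B 2 1)) / 2 := by linarith
  rw [sq, trace_fin_three, trace_fin_three]
  simp only [mul_apply, Fin.sum_univ_three]
  rw [hd0, hd1, hd2]
  -- `4 b c ≤ (b + c)²` for each pair of mirror entries
  linear_combination key / 4 + sq_nonneg (B 0 1 - B 1 0) / 2 + sq_nonneg (B 0 2 - B 2 0) / 2
    + sq_nonneg (B 1 2 - B 2 1) / 2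

end

lemma trace_pow_conj {m α : Type*} [Fintype m] [DecidableEq m] [CommRing α]
    {M : Matrix m m α} (hM : IsUnit M) (N : Matrix m m α) (k : ℕ) :
    trace ((M * N * M⁻¹) ^ k) = trace (N ^ k) := by
  rw [← hM.unit_spec, ← coe_units_inv, Units.conj_pow, trace_units_conj]

lemma trace_Amat (n : ℕ) : trace (Amat n) = 3 / (n + 2) := by
  simp [Amat, trace_fin_three]
  ring

lemma trace_Amat_sq (n : ℕ) : trace (Amat n ^ 2) = 1 + (((n : ℝ) - 1) / (n + 2)) ^ 2 := by
  have : (n : ℝ) + 2 ≠ 0 := by positivity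
  rw [sq, trace_fin_three]
  simp [Amat, mul_apply, Fin.sum_univ_three]
  field_simp
  ring

lemma conj_Amat_notMem_doublyStochastic {n : ℕ} (hn : 17 * n + 20 < n ^ 2)
    {M : Matrix (Fin 3) (Fin 3) ℝ} (hM : IsUnit M) :
    M * Amat n * M⁻¹ ∉ doublyStochastic ℝ (Fin 3) := by
  intro hB
  have hle := trace_sq_le_of_mem_doublyStochastic hB
  rw [trace_pow_conj hM, trace_conj hM, trace_Amat, trace_Amat_sq] at hle
  have hn' : (17 * n + 20 : ℝ) < n ^ 2 := by exact_mod_cast hn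
  field_simp at hle
  nlinarith

/-- There exists `n₀ ∈ ℕ` such that no `3 × 3` doubly stochastic real matrix
is similar over `ℝ` to `A_{n₀}`. -/
theorem stmt11 :
    ∃ n₀ : ℕ, ¬ ∃ (B M : Matrix (Fin 3) (Fin 3) ℝ),
      (∀ i j, 0 ≤ B i j) ∧ (∀ i, ∑ j, B i j = 1) ∧ (∀ j, ∑ i, B i j = 1) ∧
      IsUnit M ∧ B = M * Amat n₀ * M⁻¹ := by
  refine ⟨19, ?_⟩
  rintro ⟨B, M, hnonneg, hrow, hcol, hM, rfl⟩
  exact conj_Amat_notMem_doublyStochastic (by norm_num) hM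
    (mem_doublyStochastic_iff_sum.2 ⟨hnonneg, hrow, hcol⟩)
end

section
/- For t ∈ [0, 1] define the 2×2 matrix P_t = (1/4)·[[3+t, 1−t], [1+t, 3−t]]. Then for all t ∈ [0, 1), the matrix P_t is positive and stochastic, P_t is similar over ℝ to P_0, and P_t is strong shift equivalent over ℝ₊ to P_0. -/
/-!
`P_t` has trace `3/2` and determinant `1/2` for every `t`, so all `P_t` share the eigenvalues
`1, 1/2` and are similar. For strong shift equivalence put `u(t) = (1 + t) / (1 - t)`: whenever
`u(t) / 2 ≤ u(s) ≤ u(t)`, the matrix `P_s` is conjugate to `P_t` by a nonnegative upper triangular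
stochastic `U` with `U⁻¹ P_t` nonnegative, an elementary equivalence over `ℝ₊`. Halving `u`
finitely many times reaches `u(0) = 1`.
-/

open Matrix BigOperators

/-- Elementary strong shift equivalence between square real matrices of possibly different
sizes, with all entries of the connecting matrices lying in the set `S ⊆ ℝ`. -/
def ESSE (S : Set ℝ) {m k : ℕ}
    (A : Matrix (Fin m) (Fin m) ℝ) (B : Matrix (Fin k) (Fin k) ℝ) : Prop :=
  ∃ (U : Matrix (Fin m) (Fin k) ℝ) (V : Matrix (Fin k) (Fin m) ℝ),
    (∀ i j, U i j ∈ S) ∧ (∀ i j, V i j ∈ S) ∧ A = U * V ∧ B = V * U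

/-- Strong shift equivalence over `S`: a finite chain of elementary strong shift equivalences
through square matrices of possibly varying sizes. -/
inductive SSE (S : Set ℝ) :
    ∀ {m k : ℕ}, Matrix (Fin m) (Fin m) ℝ → Matrix (Fin k) (Fin k) ℝ → Prop
  | refl {m : ℕ} (A : Matrix (Fin m) (Fin m) ℝ) : SSE S A A
  | tail {m k l : ℕ} {A : Matrix (Fin m) (Fin m) ℝ} {B : Matrix (Fin k) (Fin k) ℝ}
      {C : Matrix (Fin l) (Fin l) ℝ} : SSE S A B → ESSE S B C → SSE S A C

/-- The matrix `P_t = (1/4) · [[3+t, 1−t], [1+t, 3−t]]`. -/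
noncomputable def Pmat (t : ℝ) : Matrix (Fin 2) (Fin 2) ℝ :=
  (1 / 4 : ℝ) • !![3 + t, 1 - t; 1 + t, 3 - t]

namespace SSE

variable {S : Set ℝ}

theorem head {m k l : ℕ} {A : Matrix (Fin m) (Fin m) ℝ} {B : Matrix (Fin k) (Fin k) ℝ}
    {C : Matrix (Fin l) (Fin l) ℝ} (hAB : ESSE S A B) (hBC : SSE S B C) : SSE S A C := by
  induction hBC with
  | refl B => exact (SSE.refl A).tail hAB
  | tail _ hCD ih => exact (ih hAB).tail hCD

end SSE

/-- The hypothesis `hst'` says `u(s) ≥ u(t) / 2` for `u(t) = (1 + t) / (1 - t)`. -/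
theorem esse_Pmat {s t : ℝ} (hs : 0 ≤ s) (hst : s ≤ t)
    (hst' : (1 + t) * (1 - s) ≤ 2 * (1 + s) * (1 - t)) :
    ESSE {x : ℝ | 0 ≤ x} (Pmat t) (Pmat s) := by
  have ht3 : t ≤ 3 := by nlinarith
  have hs_pos : 0 < 1 + s := by linarith
  have ht_pos : 0 < 1 + t := by linarith
  refine ⟨!![(1 + s) / (1 + t), (t - s) / (1 + t); 0, 1],
    !![(1 + t) * (3 + s) / (4 * (1 + s)), (1 + 3 * s - 3 * t - t * s) / (4 * (1 + s));
      (1 + t) / 4, (3 - t) / 4], ?_, ?_, ?_, ?_⟩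
  · simp only [Fin.forall_fin_two, Set.mem_ofPred_eq, of_apply, cons_val', cons_val_zero,
      cons_val_one, cons_val_fin_one]
    exact ⟨⟨by positivity, div_nonneg (by linarith) ht_pos.le⟩, le_rfl, zero_le_one⟩
  · simp only [Fin.forall_fin_two, Set.mem_ofPred_eq, of_apply, cons_val', cons_val_zero,
      cons_val_one, cons_val_fin_one]
    exact ⟨⟨by positivity, div_nonneg (by linarith) (by positivity)⟩, by linarith, by linarith⟩
  all_goals
    ext i j
    fin_cases i <;> fin_cases j <;> simp [Pmat, mul_apply, Fin.sum_univ_two] <;>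
      field_simp <;> ring

theorem sse_Pmat_zero_of_le_pow (n : ℕ) {t : ℝ} (h0 : 0 ≤ t) (h1 : t < 1)
    (hn : 1 + t ≤ 2 ^ n * (1 - t)) : SSE {x : ℝ | 0 ≤ x} (Pmat t) (Pmat 0) := by
  induction n generalizing t with
  | zero =>
    obtain rfl : t = 0 := by rw [pow_zero, one_mul] at hn; linarith
    exact SSE.refl _
  | succ n ih =>
    by_cases hsmall : 1 + t ≤ 2 * (1 - t)
    · exact SSE.head (esse_Pmat le_rfl h0 (by linarith)) (SSE.refl _)
    · -- `s` is chosen with `u(s) = u(t) / 2`.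
      have h3t : 0 < 3 - t := by linarith
      set s := (3 * t - 1) / (3 - t) with hs
      have hs_add : 1 + s = 2 * (1 + t) / (3 - t) := by rw [hs]; field_simp; ring
      have hs_sub : 1 - s = 4 * (1 - t) / (3 - t) := by rw [hs]; field_simp; ring
      have hs0 : 0 ≤ s := div_nonneg (by linarith) h3t.le
      have hst : s ≤ t := by rw [hs, div_le_iff₀ h3t]; nlinarith
      have hstep : (1 + t) * (1 - s) = 2 * (1 + s) * (1 - t) := by
        rw [hs_add, hs_sub]; field_simp; ring
      refine SSE.head (esse_Pmat hs0 hst hstep.le) (ih hs0 (by linarith) ?_)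
      rw [hs_add, hs_sub, mul_div_assoc', div_le_div_iff_of_pos_right h3t]
      rw [pow_succ] at hn
      linarith

theorem Pmat_pos {t : ℝ} (h0 : -1 < t) (h1 : t < 1) (i j : Fin 2) : 0 < Pmat t i j := by
  fin_cases i <;> fin_cases j <;> simp [Pmat] <;> linarith

theorem sum_Pmat_row (t : ℝ) (i : Fin 2) : ∑ j, Pmat t i j = 1 := by
  fin_cases i <;> simp [Pmat, Fin.sum_univ_two] <;> ring

/-- It fixes the common Perron eigenvector `(1, 1)` and sends the `1/2`-eigenvector `(1, -1)` of
`P_0` to the `1/2`-eigenvector `(1 - t, -(1 + t))` of `P_t`. -/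
noncomputable def conjPmat (t : ℝ) : Matrix (Fin 2) (Fin 2) ℝ :=
  !![(2 - t) / 2, t / 2; -(t / 2), (2 + t) / 2]

theorem det_conjPmat (t : ℝ) : (conjPmat t).det = 1 := by
  rw [conjPmat, det_fin_two_of]; ring

theorem Pmat_mul_conjPmat (t : ℝ) : Pmat t * conjPmat t = conjPmat t * Pmat 0 := by
  ext i j
  fin_cases i <;> fin_cases j <;> simp [Pmat, conjPmat, mul_apply, Fin.sum_univ_two] <;> ring

/-- For every `t ∈ [0, 1)`, the matrix `P_t` is positive and stochastic,
similar over `ℝ` to `P_0`, and strong shift equivalent over `ℝ₊` to `P_0`. -/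
theorem stmt15 (t : ℝ) (h0 : 0 ≤ t) (h1 : t < 1) :
    (∀ i j, 0 < Pmat t i j) ∧ (∀ i, ∑ j, Pmat t i j = 1) ∧
    (∃ M : Matrix (Fin 2) (Fin 2) ℝ, IsUnit M ∧ Pmat t = M * Pmat 0 * M⁻¹) ∧
    SSE {x : ℝ | 0 ≤ x} (Pmat t) (Pmat 0) := by
  have hdet : IsUnit (conjPmat t).det := by rw [det_conjPmat]; exact isUnit_one
  refine ⟨Pmat_pos (by linarith) h1, sum_Pmat_row t,
    ⟨conjPmat t, (isUnit_iff_isUnit_det _).mpr hdet, ?_⟩, ?_⟩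
  · rw [← Pmat_mul_conjPmat, mul_nonsing_inv_cancel_right _ _ hdet]
  · obtain ⟨n, hn⟩ := pow_unbounded_of_one_lt ((1 + t) / (1 - t)) one_lt_two
    exact sse_Pmat_zero_of_le_pow n h0 h1 ((div_le_iff₀ (by linarith)).mp hn.le)
end
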